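/- arXiv:2207.06979 — 4 statements merged into one kernel-verified Lean document; each statement's English description precedes it below -/
import Mathlib

section
/- Let d ≥ 1 and k ∈ ℕ with 1 ≤ k ≤ d, and let Q₀ ⊂ ℝ^d be a cube. There is a constant C > 0 depending only on d and k such that: if u ∈ BMO^k(Q₀) and H_k is any k-dimensional affine subspace of ℝ^d parallel to (the faces of) Q₀ which meets Q₀, then the restriction u|_{Q₀∩H_k} belongs to BMO(Q₀∩H_k) (classical bounded mean oscillation on the k-dimensional cube Q₀∩H_k with respect to the k-dimensional Hausdorff measure 𝓗^k) and ‖u|_{Q₀∩H_k}‖_{BMO(Q₀∩H_k)} ≤ C ‖u‖_{BMO^k(Q₀)}. -/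
/-!
On an axis-parallel `k`-plane `H`, the `k`-dimensional Hausdorff measure is comparable to the
Lebesgue measure of the coordinate projection onto `H`, so every ball `B(x, r)` meets `H` in
`𝓗^k`-measure at most a constant times `r^k`. Summing over a cover by balls, `𝓗^k ⌊ H` is
dominated by the Hausdorff content `𝓗^k_∞`, and hence every `𝓗^k`-integral over `H` by the
corresponding Choquet integral; quasicontinuity makes `u` measurable for `𝓗^k ⌊ H`. For a
subcube `Q`, replacing the mean by an arbitrary constant costs a factor `2`, and `𝓗^k(Q ∩ H)`
is at least `l(Q)^k`. Finally `Q` can be slid in the directions normal to `H` to a cube of the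
same size inside `Q₀` with the same slice, whose Choquet oscillation is controlled by the
`BMO^k(Q₀)` seminorm.
-/
open Set MeasureTheory ENNReal NNReal Filter

noncomputable section

/-- `ℝ^d` with the Euclidean metric. -/
abbrev Euc (d : ℕ) : Type := EuclideanSpace ℝ (Fin d)

/-- An axis-parallel cube in `ℝ^d`, given by its lower corner and (positive) side length. -/
structure Cube (d : ℕ) where
  corner : Fin d → ℝ
  side : ℝ
  side_pos : 0 < side

namespace Cube

/-- The (half-open) set of points of the cube. -/
def set {d : ℕ} (Q : Cube d) : Set (Euc d) :=
  {x : Euc d | ∀ i, Q.corner i ≤ x i ∧ x i < Q.corner i + Q.side}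

/-- The dyadic lattice `𝓓(Q)` generated by `Q`: all cubes of side `l(Q)·2ⁿ` (`n : ℤ`) with
corners on the correspondingly rescaled grid anchored at the corner of `Q`; equivalently `Q`,
its dyadic ancestors, and all of their repeated dyadic subdivisions. -/
def dyadic {d : ℕ} (Q : Cube d) : Set (Cube d) :=
  {Q' | ∃ (n : ℤ) (k : Fin d → ℤ), Q'.side = Q.side * 2 ^ n ∧
    ∀ i, Q'.corner i = Q.corner i + (k i : ℝ) * (Q.side * 2 ^ n)}

end Cube

/-- The spherical Hausdorff content `𝓗^β_∞`, with `ω_β = π^{β/2}/Γ(β/2+1)`. -/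
def hausdorffContent (d : ℕ) (β : ℝ) (E : Set (Euc d)) : ℝ≥0∞ :=
  ⨅ (c : ℕ → Euc d × ℝ) (_ : E ⊆ ⋃ i, Metric.ball (c i).1 (c i).2),
    ∑' i, ENNReal.ofReal (Real.pi ^ (β / 2) / Real.Gamma (β / 2 + 1) * (c i).2 ^ β)

/-- The dyadic Hausdorff content `𝓗^{β,Q}_∞` adapted to the cube `Q`. -/
def dyadicContent (d : ℕ) (β : ℝ) (Q : Cube d) (E : Set (Euc d)) : ℝ≥0∞ :=
  ⨅ (c : ℕ → Cube d) (_ : ∀ i, c i ∈ Q.dyadic) (_ : E ⊆ ⋃ i, (c i).set),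
    ∑' i, ENNReal.ofReal ((c i).side ^ β)

/-- The Choquet integral `∫_A f dH := ∫_0^∞ H({x ∈ A : f x > t}) dt`. -/
def choquetIntegral {X : Type*} (H : Set X → ℝ≥0∞) (A : Set X) (f : X → ℝ) : ℝ≥0∞ :=
  ∫⁻ t in Set.Ioi (0 : ℝ), H {x | x ∈ A ∧ t < f x}

/-- `f` is `H`-quasicontinuous: for every `ε > 0` there is an open set `O` with `H O < ε`
such that `f` restricted to `Oᶜ` is continuous. -/
def QuasiContinuous {X : Type*} [TopologicalSpace X] (H : Set X → ℝ≥0∞) (f : X → ℝ) : Prop :=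
  ∀ ε : ℝ, 0 < ε → ∃ O : Set X, IsOpen O ∧ H O < ENNReal.ofReal ε ∧ ContinuousOn f Oᶜ

/-- `f ∈ L¹(A; H)`: `f` is `H`-quasicontinuous and `∫_A |f| dH < ∞`. -/
def MemChoquetL1 {X : Type*} [TopologicalSpace X] (H : Set X → ℝ≥0∞) (A : Set X)
    (f : X → ℝ) : Prop :=
  QuasiContinuous H f ∧ choquetIntegral H A (fun x => |f x|) < ⊤

/-- The `BMO^β(Q₀)` seminorm: `sup_{Q ⊆ Q₀} inf_{c ∈ ℝ} l(Q)^{-β} ∫_Q |u - c| d𝓗^β_∞`. -/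
def bmoSeminorm (d : ℕ) (β : ℝ) (Q₀ : Set (Euc d)) (u : Euc d → ℝ) : ℝ≥0∞ :=
  ⨆ (Q : Cube d) (_ : Q.set ⊆ Q₀),
    ⨅ c : ℝ, choquetIntegral (hausdorffContent d β) Q.set (fun x => |u x - c|) /
      ENNReal.ofReal (Q.side ^ β)

/-- Membership in `BMO^β(Q₀)`. -/
def MemBMO (d : ℕ) (β : ℝ) (Q₀ : Set (Euc d)) (u : Euc d → ℝ) : Prop :=
  MemChoquetL1 (hausdorffContent d β) Q₀ u ∧ bmoSeminorm d β Q₀ u < ⊤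


/-- The classical John–Nirenberg BMO seminorm on `Q₀` with respect to Lebesgue measure. -/
def bmoClassical (d : ℕ) (Q₀ : Set (Euc d)) (u : Euc d → ℝ) : ℝ≥0∞ :=
  ⨆ (Q : Cube d) (_ : Q.set ⊆ Q₀),
    (volume Q.set)⁻¹ * ∫⁻ x in Q.set, ENNReal.ofReal |u x - ⨍ y in Q.set, u y|

/-- The axis-parallel affine subspace of `ℝ^d` obtained by freeing the coordinates in `S`
and fixing the remaining coordinates to the values of `b`. -/
def hyperplane (d : ℕ) (S : Finset (Fin d)) (b : Fin d → ℝ) : Set (Euc d) :=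
  {x : Euc d | ∀ i ∉ S, x i = b i}

/-- The classical BMO seminorm of `u` on `Q₀ ∩ H` with respect to the `k`-dimensional
Hausdorff measure `𝓗^k`, the supremum being over the subcubes `Q.set ∩ H ⊆ Q₀ ∩ H`. -/
def bmoClassicalOnPlane (d k : ℕ) (Q₀ : Cube d) (H : Set (Euc d)) (u : Euc d → ℝ) : ℝ≥0∞ :=
  ⨆ (Q : Cube d) (_ : Q.set ∩ H ⊆ Q₀.set),
    (Measure.hausdorffMeasure (k : ℝ) (Q.set ∩ H))⁻¹ *
      ∫⁻ x in Q.set ∩ H,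
        ENNReal.ofReal |u x - ⨍ y in Q.set ∩ H, u y ∂(Measure.hausdorffMeasure (k : ℝ))|
          ∂(Measure.hausdorffMeasure (k : ℝ))

/-- The unique dyadic cube of `𝓓(Q)` of generation `n` (side `l(Q)·2^{-n}`) containing `x`. -/
def dyadicCubeAt {d : ℕ} (Q : Cube d) (n : ℕ) (x : Euc d) : Cube d where
  corner := fun i => Q.corner i + Q.side * (2 : ℝ)⁻¹ ^ n *
    (⌊(x i - Q.corner i) / (Q.side * (2 : ℝ)⁻¹ ^ n)⌋ : ℝ)
  side := Q.side * (2 : ℝ)⁻¹ ^ n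
  side_pos := by have := Q.side_pos; positivity

/-- The dyadic `β`-Hausdorff maximal function associated to `𝓗^{β,Q}_∞`. -/
def dyadicMaximal (d : ℕ) (β : ℝ) (Q : Cube d) (f : Euc d → ℝ) (x : Euc d) : ℝ≥0∞ :=
  ⨆ (Q' : Cube d) (_ : Q' ∈ Q.dyadic) (_ : x ∈ Q'.set),
    choquetIntegral (dyadicContent d β Q) Q'.set (fun y => |f y|) / ENNReal.ofReal (Q'.side ^ β)

/-- The `BMO^{β,p}(Q₀)` seminorm. -/
def bmoSeminormP (d : ℕ) (β p : ℝ) (Q₀ : Set (Euc d)) (u : Euc d → ℝ) : ℝ≥0∞ :=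
  ⨆ (Q : Cube d) (_ : Q.set ⊆ Q₀),
    ⨅ c : ℝ, (choquetIntegral (hausdorffContent d β) Q.set (fun x => |u x - c| ^ p) /
      ENNReal.ofReal (Q.side ^ β)) ^ (1 / p)

/-- The standard normalization constant `γ(α) = π^{d/2} 2^α Γ(α/2) / Γ((d-α)/2)`. -/
def rieszConst (d : ℕ) (α : ℝ) : ℝ :=
  Real.pi ^ ((d : ℝ) / 2) * 2 ^ α * Real.Gamma (α / 2) / Real.Gamma (((d : ℝ) - α) / 2)

/-- The Riesz potential `I_α μ (x) = γ(α)⁻¹ ∫ |x - y|^{α - d} dμ(y)`. -/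
def rieszPotential (d : ℕ) (α : ℝ) (μ : Measure (Euc d)) (x : Euc d) : ℝ :=
  (rieszConst d α)⁻¹ * (∫⁻ y, ENNReal.ofReal (‖x - y‖ ^ (α - (d : ℝ))) ∂μ).toReal

/-- The Morrey norm `‖μ‖_{ℳ^γ} = sup_{x, r>0} μ(B(x,r))/r^γ`. -/
def morreyNorm (d : ℕ) (γ : ℝ) (μ : Measure (Euc d)) : ℝ≥0∞ :=
  ⨆ (x : Euc d) (r : ℝ) (_ : 0 < r), μ (Metric.ball x r) / ENNReal.ofReal (r ^ γ)

/-- The dyadic `BMO^β_*(Q₀)` seminorm, where for each subcube `Q` the dyadic Hausdorff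
content adapted to that `Q` is used. -/
def bmoDyadicSeminorm (d : ℕ) (β : ℝ) (Q₀ : Set (Euc d)) (u : Euc d → ℝ) : ℝ≥0∞ :=
  ⨆ (Q : Cube d) (_ : Q.set ⊆ Q₀),
    ⨅ c : ℝ, choquetIntegral (dyadicContent d β Q) Q.set (fun x => |u x - c|) /
      ENNReal.ofReal (Q.side ^ β)

/-- A (possibly infinite) cube in `ℝ^d`: either a finite cube, or a product of intervals
which are infinite in every coordinate direction. -/
def IsGenCube (d : ℕ) (S : Set (Euc d)) : Prop :=
  (∃ Q : Cube d, S = Q.set) ∨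
  (∃ I : Fin d → Set ℝ,
      (∀ i, (∃ a, I i = Set.Ici a) ∨ (∃ b, I i = Set.Iio b) ∨ I i = Set.univ) ∧
      S = {x : Euc d | ∀ i, x i ∈ I i})

/-- The Choquet integral of an `ℝ≥0∞`-valued function. -/
def choquetIntegralE {X : Type*} (H : Set X → ℝ≥0∞) (f : X → ℝ≥0∞) : ℝ≥0∞ :=
  ∫⁻ t in Set.Ioi (0 : ℝ), H {x | ENNReal.ofReal t < f x}


open Topology

section CapacityDomination

variable {X : Type*} [MeasurableSpace X] {μ : Measure X} {H : Set X → ℝ≥0∞}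
  {M : ℝ≥0∞}

theorem lintegral_ofReal_le_lintegral_measure_lt (μ : Measure X) (f : X → ℝ) :
    ∫⁻ x, ENNReal.ofReal (f x) ∂μ ≤ ∫⁻ t in Ioi (0 : ℝ), μ {x | t < f x} := by
  obtain ⟨g, hg, hgf, hfg⟩ := exists_measurable_le_lintegral_eq μ fun x => ENNReal.ofReal (f x)
  have hg_top : ∀ x, g x ≠ ⊤ := fun x => ne_top_of_le_ne_top ofReal_ne_top (hgf x)
  calc ∫⁻ x, ENNReal.ofReal (f x) ∂μ = ∫⁻ x, ENNReal.ofReal (g x).toReal ∂μ := by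
        simp_rw [hfg, ofReal_toReal (hg_top _)]
    _ = ∫⁻ t in Ioi (0 : ℝ), μ {x | t < (g x).toReal} :=
        lintegral_eq_lintegral_meas_lt μ (.of_forall fun _ => toReal_nonneg)
          hg.ennreal_toReal.aemeasurable
    _ ≤ ∫⁻ t in Ioi (0 : ℝ), μ {x | t < f x} := by
        refine setLIntegral_mono' measurableSet_Ioi fun t ht => measure_mono fun x hx => ?_
        have : ENNReal.ofReal t < ENNReal.ofReal (f x) :=
          ((ofReal_lt_iff_lt_toReal (le_of_lt ht) (hg_top x)).2 hx).trans_le (hgf x)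
        exact (ofReal_lt_ofReal_iff'.1 this).1

theorem lintegral_ofReal_le_mul_choquetIntegral (hM : M ≠ ⊤) (hμH : ∀ E, μ E ≤ M * H E)
    {A : Set X} (hA : MeasurableSet A) (f : X → ℝ) :
    ∫⁻ x in A, ENNReal.ofReal (f x) ∂μ ≤ M * choquetIntegral H A f := by
  rw [choquetIntegral, ← lintegral_const_mul' M _ hM]
  refine (lintegral_ofReal_le_lintegral_measure_lt _ f).trans (lintegral_mono fun t => ?_)
  rw [Measure.restrict_apply' hA, inter_comm]
  exact hμH _

theorem QuasiContinuous.aemeasurable [TopologicalSpace X] [OpensMeasurableSpace X]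
    (hM : M ≠ ⊤) (hμH : ∀ E, μ E ≤ M * H E) {f : X → ℝ} (hf : QuasiContinuous H f) :
    AEMeasurable f μ := by
  choose O hO_open hO_small hf_cont using fun n : ℕ => hf (1 / (n + 1)) Nat.one_div_pos_of_nat
  have hnull : μ (⋂ n, O n) = 0 := by
    have hle (n : ℕ) : μ (⋂ n, O n) ≤ M * ENNReal.ofReal (1 / (n + 1)) :=
      (measure_mono (iInter_subset O n)).trans ((hμH _).trans (mul_le_mul_right (hO_small n).le M))
    have hlim : Tendsto (fun n : ℕ => M * ENNReal.ofReal (1 / (n + 1))) atTop (𝓝 0) := by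
      simpa using ENNReal.Tendsto.const_mul
        (ENNReal.tendsto_ofReal tendsto_one_div_add_atTop_nhds_zero_nat) (Or.inr hM)
    exact le_antisymm (ge_of_tendsto' hlim hle) zero_le
  have hfull : μ.restrict (⋃ n, (O n)ᶜ) = μ := by
    rw [← compl_iInter]
    exact Measure.restrict_eq_self_of_ae_mem (compl_mem_ae_iff.2 hnull)
  rw [← hfull]
  exact aemeasurable_iUnion_iff.2 fun n =>
    (hf_cont n).aemeasurable (hO_open n).isClosed_compl.measurableSet

theorem MemChoquetL1.integrable_restrict [TopologicalSpace X] [OpensMeasurableSpace X]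
    (hM : M ≠ ⊤) (hμH : ∀ E, μ E ≤ M * H E) {A : Set X} (hA : MeasurableSet A)
    {u : X → ℝ} (hu : MemChoquetL1 H A u) : Integrable u (μ.restrict A) := by
  refine ⟨(hu.1.aemeasurable hM hμH).restrict.aestronglyMeasurable, ?_⟩
  rw [hasFiniteIntegral_iff_norm]
  simp_rw [Real.norm_eq_abs]
  exact (lintegral_ofReal_le_mul_choquetIntegral hM hμH hA _).trans_lt (mul_lt_top hM.lt_top hu.2)

theorem lintegral_abs_sub_average_le [IsFiniteMeasure μ] {u : X → ℝ} (hu : Integrable u μ)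
    (c : ℝ) :
    ∫⁻ x, ENNReal.ofReal |u x - ⨍ y, u y ∂μ| ∂μ ≤
      2 * ∫⁻ x, ENNReal.ofReal |u x - c| ∂μ := by
  set m := ⨍ y, u y ∂μ
  have hmean : μ univ * ENNReal.ofReal |m - c| ≤ ∫⁻ x, ENNReal.ofReal |u x - c| ∂μ := by
    have hsub : μ.real univ * (m - c) = ∫ x, (u x - c) ∂μ := by
      rw [integral_sub hu (integrable_const c), integral_const, ← measure_smul_average]
      simp only [smul_eq_mul]
      ring
    have hint : Integrable (fun x => |u x - c|) μ := (hu.sub (integrable_const c)).abs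
    rw [← ofReal_integral_eq_lintegral_ofReal hint (.of_forall fun _ => abs_nonneg _),
        ← ofReal_measureReal, ← ENNReal.ofReal_mul measureReal_nonneg,
        ← abs_of_nonneg (measureReal_nonneg (μ := μ) (s := univ)), ← abs_mul,
        hsub]
    exact ENNReal.ofReal_le_ofReal abs_integral_le_integral_abs
  calc ∫⁻ x, ENNReal.ofReal |u x - m| ∂μ
      ≤ ∫⁻ x, (ENNReal.ofReal |u x - c| + ENNReal.ofReal |m - c|) ∂μ := by
        refine lintegral_mono fun x => (ofReal_le_ofReal ?_).trans ofReal_add_le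
        calc |u x - m| ≤ |u x - c| + |c - m| := abs_sub_le _ c _
          _ = |u x - c| + |m - c| := by rw [abs_sub_comm c m]
    _ = ∫⁻ x, ENNReal.ofReal |u x - c| ∂μ + μ univ * ENNReal.ofReal |m - c| := by
        rw [lintegral_add_right _ measurable_const, lintegral_const, mul_comm]
    _ ≤ 2 * ∫⁻ x, ENNReal.ofReal |u x - c| ∂μ := by
        rw [two_mul]
        gcongr

theorem inv_mul_setLIntegral_abs_sub_setAverage_le (hM : M ≠ ⊤) (hμH : ∀ E, μ E ≤ M * H E)
    {A : Set X} (hA : MeasurableSet A) (hA_top : μ A ≠ ⊤) {s : ℝ≥0∞} (hs : s ≤ μ A)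
    {u : X → ℝ} (hu : Integrable u (μ.restrict A)) :
    (μ A)⁻¹ * ∫⁻ x in A, ENNReal.ofReal |u x - ⨍ y in A, u y ∂μ| ∂μ ≤
      2 * M * ⨅ c : ℝ, choquetIntegral H A (fun x => |u x - c|) / s := by
  have : IsFiniteMeasure (μ.restrict A) := isFiniteMeasure_restrict.2 hA_top
  rw [ENNReal.mul_iInf fun h => absurd h (mul_ne_top ofNat_ne_top hM)]
  refine le_iInf fun c => ?_
  calc (μ A)⁻¹ * ∫⁻ x in A, ENNReal.ofReal |u x - ⨍ y in A, u y ∂μ| ∂μ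
      ≤ s⁻¹ * (2 * (M * choquetIntegral H A fun x => |u x - c|)) :=
        mul_le_mul' (ENNReal.inv_le_inv.2 hs) ((lintegral_abs_sub_average_le hu c).trans
          (mul_le_mul_right (lintegral_ofReal_le_mul_choquetIntegral hM hμH hA _) 2))
    _ = 2 * M * (choquetIntegral H A (fun x => |u x - c|) / s) := by
        rw [div_eq_mul_inv]
        ring

end CapacityDomination

def unitBallConst (β : ℝ) : ℝ := Real.pi ^ (β / 2) / Real.Gamma (β / 2 + 1)

theorem unitBallConst_pos {β : ℝ} (hβ : 0 ≤ β) : 0 < unitBallConst β :=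
  div_pos (Real.rpow_pos_of_pos Real.pi_pos _) (Real.Gamma_pos_of_pos (by positivity))

theorem measure_le_mul_hausdorffContent {d : ℕ} {μ : Measure (Euc d)} {β : ℝ} {M : ℝ≥0∞}
    (hM : M ≠ ⊤)
    (hμ : ∀ x r, 0 < r →
      μ (Metric.ball x r) ≤ M * ENNReal.ofReal (unitBallConst β * r ^ β))
    (E : Set (Euc d)) : μ E ≤ M * hausdorffContent d β E := by
  have : Nonempty {c : ℕ → Euc d × ℝ // E ⊆ ⋃ i, Metric.ball (c i).1 (c i).2} :=
    ⟨⟨fun n => (0, n), by simp [Metric.iUnion_ball_nat]⟩⟩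
  rw [hausdorffContent, iInf_subtype', ENNReal.mul_iInf fun h => absurd h hM]
  refine le_iInf fun ⟨c, hc⟩ => ?_
  calc μ E ≤ ∑' i, μ (Metric.ball (c i).1 (c i).2) :=
        (measure_mono hc).trans (measure_iUnion_le _)
    _ ≤ ∑' i, M * ENNReal.ofReal (unitBallConst β * (c i).2 ^ β) := by
        refine ENNReal.tsum_le_tsum fun i => ?_
        rcases le_or_gt (c i).2 0 with hr | hr
        · simp [Metric.ball_eq_empty.2 hr]
        · exact hμ _ _ hr
    _ = M * ∑' i, ENNReal.ofReal (unitBallConst β * (c i).2 ^ β) := ENNReal.tsum_mul_left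

section Hyperplane

variable {d : ℕ} (S : Finset (Fin d)) (b : Fin d → ℝ)

def restrictCoords (x : Euc d) : S → ℝ := fun i => x i

def extendCoords (y : S → ℝ) : Euc d :=
  WithLp.toLp 2 fun i => if h : i ∈ S then y ⟨i, h⟩ else b i

theorem measurableSet_hyperplane : MeasurableSet (hyperplane d S b) := by
  have : hyperplane d S b = ⋂ i ∉ S, (fun x : Euc d => x i) ⁻¹' {b i} := by
    ext x; simp [hyperplane]
  rw [this]
  exact .biInter (to_countable _) fun i _ =>
    (measurable_pi_apply i).comp (PiLp.continuous_ofLp 2 _).measurable (measurableSet_singleton _)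

theorem extendCoords_mem_hyperplane (y : S → ℝ) : extendCoords S b y ∈ hyperplane d S b := by
  intro i hi
  simp [extendCoords, hi]

theorem restrictCoords_extendCoords (y : S → ℝ) :
    restrictCoords S (extendCoords S b y) = y := by
  ext i
  simp [restrictCoords, extendCoords, i.2]

theorem extendCoords_restrictCoords {x : Euc d} (hx : x ∈ hyperplane d S b) :
    extendCoords S b (restrictCoords S x) = x := by
  ext i
  by_cases hi : i ∈ S
  · simp [extendCoords, restrictCoords, hi]
  · simp [extendCoords, hi, hx i hi]

theorem extendCoords_image_restrictCoords_image {E : Set (Euc d)} (hE : E ⊆ hyperplane d S b) :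
    extendCoords S b '' (restrictCoords S '' E) = E := by
  rw [image_image]
  exact (image_congr fun x hx => extendCoords_restrictCoords S b (hE hx)).trans (image_id E)

theorem lipschitzWith_restrictCoords : LipschitzWith 1 (restrictCoords (d := d) S) :=
  LipschitzWith.of_dist_le_mul fun x y => by
    rw [NNReal.coe_one, one_mul, dist_pi_le_iff dist_nonneg]
    exact fun i => (PiLp.norm_apply_le (x - y) i).trans_eq' (by simp [restrictCoords, dist_eq_norm])

theorem lipschitzWith_extendCoords :
    LipschitzWith (NNReal.sqrt S.card) (extendCoords S b) :=
  LipschitzWith.of_dist_le_mul fun y z => by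
    have hcoord (i : Fin d) : dist (extendCoords S b y i) (extendCoords S b z i) ^ 2 ≤
        if i ∈ S then dist y z ^ 2 else 0 := by
      by_cases hi : i ∈ S
      · simpa [extendCoords, hi] using
          pow_le_pow_left₀ dist_nonneg (dist_le_pi_dist y z ⟨i, hi⟩) 2
      · simp [extendCoords, hi]
    rw [EuclideanSpace.dist_eq, Real.coe_sqrt, NNReal.coe_natCast,
      ← Real.sqrt_sq (dist_nonneg (x := y) (y := z)), ← Real.sqrt_mul (Nat.cast_nonneg _)]
    refine Real.sqrt_le_sqrt ((Finset.sum_le_sum fun i _ => hcoord i).trans_eq ?_)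
    rw [Finset.sum_ite_mem, Finset.univ_inter, Finset.sum_const, nsmul_eq_mul]

theorem hausdorffMeasure_pi_card :
    (μH[(S.card : ℝ)] : Measure (S → ℝ)) = volume := by
  simpa using hausdorffMeasure_pi_real (ι := S)

theorem volume_image_restrictCoords_le (E : Set (Euc d)) :
    volume (restrictCoords S '' E) ≤ μH[(S.card : ℝ)] E := by
  simpa [hausdorffMeasure_pi_card] using
    (lipschitzWith_restrictCoords S).hausdorffMeasure_image_le (Nat.cast_nonneg S.card) E

theorem hausdorffMeasure_le_volume_image_restrictCoords {E : Set (Euc d)}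
    (hE : E ⊆ hyperplane d S b) :
    μH[(S.card : ℝ)] E ≤
      ENNReal.ofReal (√S.card ^ S.card) * volume (restrictCoords S '' E) := by
  have h := (lipschitzWith_extendCoords S b).hausdorffMeasure_image_le (Nat.cast_nonneg S.card)
    (restrictCoords S '' E)
  rwa [extendCoords_image_restrictCoords_image S b hE, hausdorffMeasure_pi_card,
    ENNReal.rpow_natCast,
    ← ENNReal.ofReal_coe_nnreal, Real.coe_sqrt, NNReal.coe_natCast,
    ← ENNReal.ofReal_pow (Real.sqrt_nonneg _)] at h

end Hyperplane

def hyperplaneConst (k : ℕ) : ℝ := (2 * √k) ^ k / unitBallConst k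

theorem hyperplaneConst_pos (k : ℕ) : 0 < hyperplaneConst k := by
  rcases k.eq_zero_or_pos with rfl | hk
  · simp [hyperplaneConst, unitBallConst]
  · exact div_pos (by positivity) (unitBallConst_pos k.cast_nonneg)

section HyperplaneMeasure

variable {d : ℕ} (S : Finset (Fin d)) (b : Fin d → ℝ)

theorem hausdorffMeasure_restrict_hyperplane_ball_le (x : Euc d) {r : ℝ} (hr : 0 < r) :
    μH[(S.card : ℝ)].restrict (hyperplane d S b) (Metric.ball x r) ≤
      ENNReal.ofReal (hyperplaneConst S.card) *
        ENNReal.ofReal (unitBallConst S.card * r ^ (S.card : ℝ)) := by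
  have hball : restrictCoords S '' (Metric.ball x r ∩ hyperplane d S b) ⊆
      Metric.ball (restrictCoords S x) r :=
    image_subset_iff.2 fun y hy =>
      ((lipschitzWith_restrictCoords S).dist_le_mul y x).trans_lt (by simpa using hy.1)
  rw [Measure.restrict_apply' (measurableSet_hyperplane S b)]
  calc μH[(S.card : ℝ)] (Metric.ball x r ∩ hyperplane d S b)
      ≤ ENNReal.ofReal (√S.card ^ S.card) *
          volume (restrictCoords S '' (Metric.ball x r ∩ hyperplane d S b)) :=
        hausdorffMeasure_le_volume_image_restrictCoords S b inter_subset_right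
    _ ≤ ENNReal.ofReal (√S.card ^ S.card) * volume (Metric.ball (restrictCoords S x) r) := by
        gcongr
    _ = ENNReal.ofReal (√S.card ^ S.card) * ENNReal.ofReal ((2 * r) ^ S.card) := by
        rw [Real.volume_pi_ball _ hr, Fintype.card_coe]
    _ = ENNReal.ofReal (hyperplaneConst S.card) *
          ENNReal.ofReal (unitBallConst S.card * r ^ (S.card : ℝ)) := by
        have hω := unitBallConst_pos (Nat.cast_nonneg (α := ℝ) S.card)
        rw [← ENNReal.ofReal_mul (by positivity),
          ← ENNReal.ofReal_mul (hyperplaneConst_pos S.card).le,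
          hyperplaneConst, Real.rpow_natCast]
        congr 1
        field_simp [hω.ne']
        ring

theorem hausdorffMeasure_restrict_hyperplane_le_content (E : Set (Euc d)) :
    μH[(S.card : ℝ)].restrict (hyperplane d S b) E ≤
      ENNReal.ofReal (hyperplaneConst S.card) * hausdorffContent d S.card E :=
  measure_le_mul_hausdorffContent ofReal_ne_top
    (fun x _ hr => hausdorffMeasure_restrict_hyperplane_ball_le S b x hr) E

end HyperplaneMeasure

namespace Cube

variable {d : ℕ}

theorem mem_set_iff {Q : Cube d} {x : Euc d} :
    x ∈ Q.set ↔ ∀ i, x i ∈ Ico (Q.corner i) (Q.corner i + Q.side) :=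
  Iff.rfl

theorem measurableSet (Q : Cube d) : MeasurableSet Q.set := by
  have : Q.set = WithLp.ofLp ⁻¹' univ.pi fun i => Ico (Q.corner i) (Q.corner i + Q.side) := by
    ext x; simp [mem_set_iff]
  rw [this]
  exact (PiLp.continuous_ofLp 2 _).measurable (.univ_pi fun _ => measurableSet_Ico)

theorem isBounded (Q : Cube d) : Bornology.IsBounded Q.set :=
  ((isCompact_Icc (a := Q.corner) (b := Q.corner + fun _ => Q.side)).image
    (PiLp.continuous_toLp 2 _)).isBounded.subset fun x hx =>
    ⟨x.ofLp, ⟨fun i => (hx i).1, fun i => (hx i).2.le⟩, rfl⟩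

end Cube

section CubeSlice

variable {d : ℕ} (S : Finset (Fin d)) (b : Fin d → ℝ)

theorem le_hausdorffMeasure_restrict_hyperplane_cube (Q : Cube d)
    (hb : ∀ i ∉ S, b i ∈ Ico (Q.corner i) (Q.corner i + Q.side)) :
    ENNReal.ofReal (Q.side ^ (S.card : ℝ)) ≤
      μH[(S.card : ℝ)].restrict (hyperplane d S b) Q.set := by
  have hbox : univ.pi (fun i : S => Ico (Q.corner i) (Q.corner i + Q.side)) ⊆
      restrictCoords S '' (Q.set ∩ hyperplane d S b) := by
    intro y hy
    refine ⟨extendCoords S b y, ⟨fun i => ?_, extendCoords_mem_hyperplane S b y⟩,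
      restrictCoords_extendCoords S b y⟩
    by_cases hi : i ∈ S
    · simpa [extendCoords, hi] using hy ⟨i, hi⟩ (mem_univ _)
    · simpa [extendCoords, hi] using hb i hi
  rw [Measure.restrict_apply Q.measurableSet]
  calc ENNReal.ofReal (Q.side ^ (S.card : ℝ))
      = volume (univ.pi fun i : S => Ico (Q.corner i) (Q.corner i + Q.side)) := by
        simp [volume_pi_pi, Real.volume_Ico, ENNReal.ofReal_pow Q.side_pos.le]
    _ ≤ μH[(S.card : ℝ)] (Q.set ∩ hyperplane d S b) :=
        (measure_mono hbox).trans (volume_image_restrictCoords_le S _)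

theorem hausdorffMeasure_restrict_hyperplane_cube_lt_top (Q : Cube d) :
    μH[(S.card : ℝ)].restrict (hyperplane d S b) Q.set < ⊤ := by
  obtain ⟨r, hr, hQ⟩ := Q.isBounded.subset_ball_lt 0 0
  exact (measure_mono hQ).trans_lt ((hausdorffMeasure_restrict_hyperplane_ball_le S b 0 hr).trans_lt
    (mul_lt_top ofReal_lt_top ofReal_lt_top))

variable {S b}

theorem Cube.inter_hyperplane_eq {Q Q' : Cube d} (hcorner : ∀ i ∈ S, Q.corner i = Q'.corner i)
    (hside : Q.side = Q'.side) (hb : ∀ i ∉ S, b i ∈ Ico (Q.corner i) (Q.corner i + Q.side))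
    (hb' : ∀ i ∉ S, b i ∈ Ico (Q'.corner i) (Q'.corner i + Q'.side)) :
    Q.set ∩ hyperplane d S b = Q'.set ∩ hyperplane d S b := by
  ext x
  refine and_congr_left fun hx => ?_
  refine forall_congr' fun i => ?_
  by_cases hi : i ∈ S
  · rw [hcorner i hi, hside]
  · rw [hx i hi]
    exact iff_of_true (hb i hi) (hb' i hi)

theorem mem_Ico_of_mem_inter_hyperplane {Q : Cube d} {z : Euc d}
    (hz : z ∈ Q.set ∩ hyperplane d S b) {i : Fin d} (hi : i ∉ S) :
    b i ∈ Ico (Q.corner i) (Q.corner i + Q.side) :=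
  hz.2 i hi ▸ hz.1 i

theorem Ico_subset_of_inter_hyperplane_subset {Q Q₀ : Cube d}
    (hsub : Q.set ∩ hyperplane d S b ⊆ Q₀.set) {z : Euc d}
    (hz : z ∈ Q.set ∩ hyperplane d S b)
    {i : Fin d} (hi : i ∈ S) :
    Ico (Q.corner i) (Q.corner i + Q.side) ⊆ Ico (Q₀.corner i) (Q₀.corner i + Q₀.side) := by
  intro ξ hξ
  set z' : Euc d := WithLp.toLp 2 (Function.update z.ofLp i ξ)
  have hz' : z' ∈ Q.set ∩ hyperplane d S b := by
    refine ⟨fun j => ?_, fun j hj => ?_⟩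
    · by_cases hji : j = i
      · subst hji; simpa [z'] using hξ
      · simpa [z', hji] using hz.1 j
    · simpa [z', ne_of_mem_of_not_mem hi hj |>.symm] using hz.2 j hj
  simpa [z'] using hsub hz' i

theorem exists_cube_subset_inter_hyperplane_eq (hS : S.Nonempty) {Q Q₀ : Cube d}
    (hsub : Q.set ∩ hyperplane d S b ⊆ Q₀.set) (hne : (Q.set ∩ hyperplane d S b).Nonempty) :
    ∃ Q' : Cube d, Q'.set ⊆ Q₀.set ∧
      Q'.set ∩ hyperplane d S b = Q.set ∩ hyperplane d S b ∧ Q'.side = Q.side := by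
  obtain ⟨z, hz⟩ := hne
  have hfree (i : Fin d) (hi : i ∈ S) :
      Q₀.corner i ≤ Q.corner i ∧ Q.corner i + Q.side ≤ Q₀.corner i + Q₀.side :=
    (Ico_subset_Ico_iff (by linarith [Q.side_pos])).1
      (Ico_subset_of_inter_hyperplane_subset hsub hz hi)
  have hside : Q.side ≤ Q₀.side := by
    obtain ⟨i, hi⟩ := hS
    linarith [hfree i hi]
  have hfixed (i : Fin d) (hi : i ∉ S) := mem_Ico_of_mem_inter_hyperplane (hz := hz) hi
  have hfixed₀ (i : Fin d) (hi : i ∉ S) :=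
    mem_Ico_of_mem_inter_hyperplane (hz := ⟨hsub hz, hz.2⟩) hi
  -- in the fixed directions, slide `Q` until it fits into `Q₀` while still containing `b`
  let Q' : Cube d :=
    ⟨fun i => if i ∈ S then Q.corner i else min (b i) (Q₀.corner i + Q₀.side - Q.side),
      Q.side, Q.side_pos⟩
  refine ⟨Q', fun x hx i => ?_, Cube.inter_hyperplane_eq (fun i hi => if_pos hi) rfl
    (fun i hi => ?_) hfixed, rfl⟩
  · have hxi := hx i
    by_cases hi : i ∈ S
    · simp only [Q', hi, if_true] at hxi
      exact ⟨by linarith [hxi.1, hfree i hi], by linarith [hxi.2, hfree i hi]⟩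
    · simp only [Q', hi, if_false] at hxi
      have : Q₀.corner i ≤ Q₀.corner i + Q₀.side - Q.side := by linarith
      exact ⟨by linarith [hxi.1, le_min (hfixed₀ i hi).1 this],
        by linarith [hxi.2, min_le_right (b i) (Q₀.corner i + Q₀.side - Q.side)]⟩
  · simp only [Q', hi, if_false]
    have : b i - Q.side < min (b i) (Q₀.corner i + Q₀.side - Q.side) :=
      lt_min (by linarith [Q.side_pos]) (by linarith [(hfixed₀ i hi).2])
    exact ⟨min_le_left _ _, by linarith⟩

end CubeSlice

section Restriction

variable {d : ℕ} (S : Finset (Fin d)) (b : Fin d → ℝ)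

theorem lintegral_inter_hyperplane_lt_top {A : Set (Euc d)} (hA : MeasurableSet A)
    {u : Euc d → ℝ} (hu : MemChoquetL1 (hausdorffContent d S.card) A u) :
    ∫⁻ x in A ∩ hyperplane d S b, ENNReal.ofReal |u x| ∂μH[(S.card : ℝ)] < ⊤ := by
  rw [← Measure.restrict_restrict hA]
  exact (lintegral_ofReal_le_mul_choquetIntegral ofReal_ne_top
    (hausdorffMeasure_restrict_hyperplane_le_content S b) hA _).trans_lt
      (mul_lt_top ofReal_lt_top hu.2)

theorem inv_mul_lintegral_inter_hyperplane_le {Q₀ Q : Cube d} (hQ : Q.set ⊆ Q₀.set)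
    (hne : (Q.set ∩ hyperplane d S b).Nonempty) {u : Euc d → ℝ}
    (hu : MemChoquetL1 (hausdorffContent d S.card) Q₀.set u) :
    (μH[(S.card : ℝ)] (Q.set ∩ hyperplane d S b))⁻¹ *
        ∫⁻ x in Q.set ∩ hyperplane d S b,
          ENNReal.ofReal |u x - ⨍ y in Q.set ∩ hyperplane d S b, u y ∂μH[(S.card : ℝ)]|
            ∂μH[(S.card : ℝ)] ≤
      2 * ENNReal.ofReal (hyperplaneConst S.card) *
        ⨅ c : ℝ, choquetIntegral (hausdorffContent d S.card) Q.set (fun x => |u x - c|) /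
          ENNReal.ofReal (Q.side ^ (S.card : ℝ)) := by
  have hνH := hausdorffMeasure_restrict_hyperplane_le_content S b
  obtain ⟨z, hz⟩ := hne
  rw [← Measure.restrict_apply Q.measurableSet, ← Measure.restrict_restrict Q.measurableSet]
  exact inv_mul_setLIntegral_abs_sub_setAverage_le ofReal_ne_top hνH Q.measurableSet
    (hausdorffMeasure_restrict_hyperplane_cube_lt_top S b Q).ne
    (le_hausdorffMeasure_restrict_hyperplane_cube S b Q fun i hi =>
      mem_Ico_of_mem_inter_hyperplane hz hi)
    (IntegrableOn.mono_set (hu.integrable_restrict ofReal_ne_top hνH Q₀.measurableSet) hQ)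

theorem bmoClassicalOnPlane_hyperplane_le (hS : S.Nonempty) (Q₀ : Cube d) {u : Euc d → ℝ}
    (hu : MemBMO d S.card Q₀.set u) :
    bmoClassicalOnPlane d S.card Q₀ (hyperplane d S b) u ≤
      ENNReal.ofReal (2 * hyperplaneConst S.card) * bmoSeminorm d S.card Q₀.set u := by
  refine iSup₂_le fun Q hQ => ?_
  rcases (Q.set ∩ hyperplane d S b).eq_empty_or_nonempty with hemp | hne
  · simp [hemp]
  obtain ⟨Q', hQ'₀, hslice, -⟩ := exists_cube_subset_inter_hyperplane_eq hS hQ hne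
  rw [← hslice, ENNReal.ofReal_mul zero_le_two, ofReal_ofNat]
  calc _ ≤ 2 * ENNReal.ofReal (hyperplaneConst S.card) *
        ⨅ c : ℝ, choquetIntegral (hausdorffContent d S.card) Q'.set (fun x => |u x - c|) /
          ENNReal.ofReal (Q'.side ^ (S.card : ℝ)) :=
        inv_mul_lintegral_inter_hyperplane_le S b hQ'₀ (hslice ▸ hne) hu.1
    _ ≤ 2 * ENNReal.ofReal (hyperplaneConst S.card) * bmoSeminorm d S.card Q₀.set u := by
        gcongr
        exact le_iSup₂ (f := fun (Q : Cube d) (_ : Q.set ⊆ Q₀.set) => ⨅ c : ℝ,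
          choquetIntegral (hausdorffContent d S.card) Q.set (fun x => |u x - c|) /
            ENNReal.ofReal (Q.side ^ (S.card : ℝ))) Q' hQ'₀

end Restriction

theorem bmo_restriction_general (d k : ℕ) (hk : 1 ≤ k) (Q₀ : Cube d) :
    ∃ C : ℝ, 0 < C ∧
      ∀ u : Euc d → ℝ, MemBMO d (k : ℝ) Q₀.set u →
        ∀ (S : Finset (Fin d)) (b : Fin d → ℝ), S.card = k →
          (Q₀.set ∩ hyperplane d S b).Nonempty →
          (∫⁻ x in Q₀.set ∩ hyperplane d S b, ENNReal.ofReal |u x|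
              ∂(Measure.hausdorffMeasure (k : ℝ))) < ⊤ ∧
          bmoClassicalOnPlane d k Q₀ (hyperplane d S b) u ≤
            ENNReal.ofReal C * bmoSeminorm d (k : ℝ) Q₀.set u := by
  refine ⟨2 * hyperplaneConst k, mul_pos two_pos (hyperplaneConst_pos k),
    fun u hu S b hS _ => ?_⟩
  subst hS
  exact ⟨lintegral_inter_hyperplane_lt_top S b Q₀.measurableSet hu.1,
    bmoClassicalOnPlane_hyperplane_le S b (Finset.card_pos.1 hk) Q₀ hu⟩

theorem bmo_restriction (d k : ℕ) (hk : 1 ≤ k) (hkd : k ≤ d) (Q₀ : Cube d) :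
    ∃ C : ℝ, 0 < C ∧
      ∀ u : Euc d → ℝ, MemBMO d (k : ℝ) Q₀.set u →
        ∀ (S : Finset (Fin d)) (b : Fin d → ℝ), S.card = k →
          (Q₀.set ∩ hyperplane d S b).Nonempty →
          (∫⁻ x in Q₀.set ∩ hyperplane d S b, ENNReal.ofReal |u x|
              ∂(Measure.hausdorffMeasure (k : ℝ))) < ⊤ ∧
          bmoClassicalOnPlane d k Q₀ (hyperplane d S b) u ≤
            ENNReal.ofReal C * bmoSeminorm d (k : ℝ) Q₀.set u :=
  bmo_restriction_general d k hk Q₀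

end
end

section
/- Let d ≥ 1, 0 < α ≤ β ≤ d, and let Q₀ ⊂ ℝ^d be a cube. There is a constant C > 0 depending only on α, β, and d such that every u ∈ BMO^α(Q₀) belongs to BMO^β(Q₀) and ‖u‖_{BMO^β(Q₀)} ≤ C ‖u‖_{BMO^α(Q₀)}. -/
open Set MeasureTheory ENNReal NNReal Filter

noncomputable section

/-!
Both contents are infima over the same ball covers, with gauges `ω_α r^α` and `ω_β r^β`. For
`r ≤ R` one has `r^β ≤ R^(β-α) r^α`, so on a set inside a ball of radius `R` (where any cover may
be shrunk to balls of radius `≤ R`) `𝓗^β_∞ ≤ (ω_β/ω_α) R^(β-α) 𝓗^α_∞`. A cube of side `l` lies in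
a ball of radius `l √d`; as `l^β = l^(β-α) l^α`, the normalised Choquet integrals over `Q`, hence
the BMO seminorms, compare with a constant independent of `Q`. Sets of `𝓗^α_∞`-content below
`ω_α` are covered by balls of radius `< 1`, so `𝓗^α_∞`-quasicontinuity implies
`𝓗^β_∞`-quasicontinuity.
-/

def ballConst (β : ℝ) : ℝ := Real.pi ^ (β / 2) / Real.Gamma (β / 2 + 1)

lemma ballConst_pos {β : ℝ} (hβ : 0 < β) : 0 < ballConst β :=
  div_pos (Real.rpow_pos_of_pos Real.pi_pos _) (Real.Gamma_pos_of_pos (by linarith))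

section HausdorffContent

variable {d : ℕ} {α β : ℝ} {E : Set (Euc d)}

lemma ballConst_div_mul_rpow_pos (hα : 0 < α) (hαβ : α ≤ β) {R : ℝ} (hR : 0 < R) :
    0 < ballConst β / ballConst α * R ^ (β - α) :=
  mul_pos (div_pos (ballConst_pos (hα.trans_le hαβ)) (ballConst_pos hα))
    (Real.rpow_pos_of_pos hR _)

lemma hausdorffContent_le_tsum {c : ℕ → Euc d × ℝ}
    (hc : E ⊆ ⋃ i, Metric.ball (c i).1 (c i).2) :
    hausdorffContent d β E ≤ ∑' i, ENNReal.ofReal (ballConst β * (c i).2 ^ β) :=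
  iInf₂_le c hc

lemma exists_cover_tsum_lt_of_hausdorffContent_lt {t : ℝ≥0∞}
    (h : hausdorffContent d β E < t) :
    ∃ c : ℕ → Euc d × ℝ, E ⊆ ⋃ i, Metric.ball (c i).1 (c i).2 ∧
      ∑' i, ENNReal.ofReal (ballConst β * (c i).2 ^ β) < t := by
  simp only [hausdorffContent, iInf_lt_iff, exists_prop] at h
  exact h

lemma le_mul_hausdorffContent_of_forall_cover {x K : ℝ≥0∞} (hK₀ : K ≠ 0) (hK : K ≠ ∞)
    (h : ∀ c : ℕ → Euc d × ℝ, E ⊆ ⋃ i, Metric.ball (c i).1 (c i).2 →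
      x ≤ K * ∑' i, ENNReal.ofReal (ballConst α * (c i).2 ^ α)) :
    x ≤ K * hausdorffContent d α E := by
  rw [hausdorffContent, ENNReal.mul_iInf_of_ne hK₀ hK]
  refine le_iInf fun c => ?_
  rw [ENNReal.mul_iInf_of_ne hK₀ hK]
  exact le_iInf (h c)

/-- Stated with `max r 0` because a ball of negative radius is empty while `Real.rpow` at a
negative base need not vanish. -/
lemma ofReal_ballConst_mul_rpow_le (hα : 0 < α) (hαβ : α ≤ β) {r s R : ℝ} (hs : 0 ≤ s)
    (hsR : s ≤ R) (hsr : s ≤ max r 0) :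
    ENNReal.ofReal (ballConst β * s ^ β) ≤
      ENNReal.ofReal (ballConst β / ballConst α * R ^ (β - α)) *
        ENNReal.ofReal (ballConst α * r ^ α) := by
  have hβ : 0 < β := hα.trans_le hαβ
  rcases hs.eq_or_lt with rfl | hs
  · simp [Real.zero_rpow hβ.ne']
  have hsr : s ≤ r := by simpa [hs.not_ge] using hsr
  have hsplit : s ^ β = s ^ (β - α) * s ^ α := by
    rw [← Real.rpow_add' hs.le (by linarith), sub_add_cancel]
  have hωα := ballConst_pos hα
  have hωβ := ballConst_pos hβ
  rw [← ENNReal.ofReal_mul (ballConst_div_mul_rpow_pos hα hαβ (hs.trans_le hsR)).le]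
  refine ENNReal.ofReal_le_ofReal ?_
  calc ballConst β * s ^ β
      ≤ ballConst β * (R ^ (β - α) * r ^ α) := by
        have := Real.rpow_nonneg (hs.le.trans hsR) (β - α)
        rw [hsplit]
        gcongr
    _ = ballConst β / ballConst α * R ^ (β - α) * (ballConst α * r ^ α) := by
        field_simp

lemma hausdorffContent_le_of_subset_ball (hα : 0 < α) (hαβ : α ≤ β) {x₀ : Euc d} {R : ℝ}
    (hR : 0 < R) (hE : E ⊆ Metric.ball x₀ R) :
    hausdorffContent d β E ≤
      ENNReal.ofReal (ballConst β / ballConst α * R ^ (β - α)) * hausdorffContent d α E := by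
  refine le_mul_hausdorffContent_of_forall_cover
    (by simpa using ballConst_div_mul_rpow_pos hα hαβ hR) ENNReal.ofReal_ne_top
    fun c hc => ?_
  let c' : ℕ → Euc d × ℝ := fun i =>
    if R < (c i).2 then (x₀, R) else ((c i).1, max (c i).2 0)
  have hc' : E ⊆ ⋃ i, Metric.ball (c' i).1 (c' i).2 := by
    intro x hx
    obtain ⟨i, hxi⟩ := mem_iUnion.1 (hc hx)
    refine mem_iUnion.2 ⟨i, ?_⟩
    by_cases hi : R < (c i).2
    · simpa [c', hi] using hE hx
    · simpa [c', hi] using Metric.ball_subset_ball (le_max_left _ _) hxi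
  refine (hausdorffContent_le_tsum hc').trans ?_
  rw [← ENNReal.tsum_mul_left]
  refine ENNReal.tsum_le_tsum fun i => ?_
  by_cases hi : R < (c i).2
  · simpa [c', hi] using ofReal_ballConst_mul_rpow_le hα hαβ hR.le le_rfl
      (hi.le.trans (le_max_left _ 0))
  · simpa [c', hi] using ofReal_ballConst_mul_rpow_le hα hαβ (le_max_right _ 0)
      (max_le (not_lt.1 hi) hR.le) le_rfl

/-- A cover of `α`-gauge sum below `ω_α` consists of balls of radius `< 1`. -/
lemma hausdorffContent_lt_of_lt_ballConst (hα : 0 < α) (hαβ : α ≤ β) {δ : ℝ}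
    (hδ : δ ≤ ballConst α) (h : hausdorffContent d α E < ENNReal.ofReal δ) :
    hausdorffContent d β E < ENNReal.ofReal (ballConst β / ballConst α * δ) := by
  have hωα := ballConst_pos hα
  have hK : 0 < ballConst β / ballConst α := div_pos (ballConst_pos (hα.trans_le hαβ)) hωα
  obtain ⟨c, hc, hsum⟩ := exists_cover_tsum_lt_of_hausdorffContent_lt h
  have hradius : ∀ i, max (c i).2 0 ≤ 1 := fun i => by
    refine max_le (not_lt.1 fun hi => ?_) zero_le_one
    have hterm := (ENNReal.le_tsum i).trans_lt (hsum.trans_le (ENNReal.ofReal_le_ofReal hδ))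
    rw [ENNReal.ofReal_lt_ofReal_iff hωα] at hterm
    nlinarith [Real.one_lt_rpow hi hα]
  let c' : ℕ → Euc d × ℝ := fun i => ((c i).1, max (c i).2 0)
  have hc' : E ⊆ ⋃ i, Metric.ball (c' i).1 (c' i).2 :=
    hc.trans (iUnion_mono fun i => Metric.ball_subset_ball (le_max_left _ _))
  calc hausdorffContent d β E
      ≤ ∑' i, ENNReal.ofReal (ballConst β / ballConst α) *
          ENNReal.ofReal (ballConst α * (c i).2 ^ α) := by
        refine (hausdorffContent_le_tsum hc').trans (ENNReal.tsum_le_tsum fun i => ?_)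
        simpa using ofReal_ballConst_mul_rpow_le hα hαβ (le_max_right _ 0) (hradius i) le_rfl
    _ = ENNReal.ofReal (ballConst β / ballConst α) *
          ∑' i, ENNReal.ofReal (ballConst α * (c i).2 ^ α) := ENNReal.tsum_mul_left
    _ < ENNReal.ofReal (ballConst β / ballConst α) * ENNReal.ofReal δ :=
        ENNReal.mul_lt_mul_right (by simpa using hK) ENNReal.ofReal_ne_top hsum
    _ = ENNReal.ofReal (ballConst β / ballConst α * δ) := (ENNReal.ofReal_mul hK.le).symm

lemma QuasiContinuous.hausdorffContent_of_le (hα : 0 < α) (hαβ : α ≤ β) {f : Euc d → ℝ}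
    (hf : QuasiContinuous (hausdorffContent d α) f) :
    QuasiContinuous (hausdorffContent d β) f := by
  intro ε hε
  have hωα := ballConst_pos hα
  have hωβ := ballConst_pos (hα.trans_le hαβ)
  obtain ⟨O, hO, hOα, hfO⟩ :=
    hf (min (ballConst α) (ε * ballConst α / ballConst β)) (lt_min hωα (by positivity))
  refine ⟨O, hO, (hausdorffContent_lt_of_lt_ballConst hα hαβ (min_le_left _ _) hOα).trans_le
    (ENNReal.ofReal_le_ofReal ?_), hfO⟩
  calc ballConst β / ballConst α * min (ballConst α) (ε * ballConst α / ballConst β)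
      ≤ ballConst β / ballConst α * (ε * ballConst α / ballConst β) := by
        gcongr
        exact min_le_right _ _
    _ = ε := by field_simp

end HausdorffContent

lemma choquetIntegral_le_mul_of_le {X : Type*} {H₁ H₂ : Set X → ℝ≥0∞} {A : Set X} {K : ℝ≥0∞}
    (hK : K ≠ ∞) (h : ∀ S ⊆ A, H₂ S ≤ K * H₁ S) (f : X → ℝ) :
    choquetIntegral H₂ A f ≤ K * choquetIntegral H₁ A f :=
  calc choquetIntegral H₂ A f
      ≤ ∫⁻ t in Ioi (0 : ℝ), K * H₁ {x | x ∈ A ∧ t < f x} :=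
        lintegral_mono fun _ => h _ fun _ hx => hx.1
    _ = K * choquetIntegral H₁ A f := lintegral_const_mul' _ _ hK

lemma Cube.set_subset_ball {d : ℕ} [NeZero d] (Q : Cube d) :
    Q.set ⊆ Metric.ball (WithLp.toLp 2 Q.corner) (Q.side * Real.sqrt d) := by
  intro x hx
  have hcoord : ∀ i, dist (x i) (Q.corner i) ^ 2 < Q.side ^ 2 := fun i => by
    rw [Real.dist_eq, sq_abs]
    nlinarith [hx i]
  rw [Metric.mem_ball, EuclideanSpace.dist_eq, mul_comm, ← Real.sqrt_sq Q.side_pos.le,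
    ← Real.sqrt_mul (Nat.cast_nonneg d)]
  refine Real.sqrt_lt_sqrt (by positivity) ?_
  simpa using Finset.sum_lt_sum_of_nonempty Finset.univ_nonempty fun i _ => hcoord i

section Cube

variable {d : ℕ} [NeZero d] {α β : ℝ}

lemma sqrt_pos_of_neZero : 0 < Real.sqrt d := Real.sqrt_pos.2 (Nat.cast_pos.2 (NeZero.pos d))

lemma choquetIntegral_hausdorffContent_cube_le (hα : 0 < α) (hαβ : α ≤ β) (Q : Cube d)
    (f : Euc d → ℝ) :
    choquetIntegral (hausdorffContent d β) Q.set f ≤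
      ENNReal.ofReal (ballConst β / ballConst α * Real.sqrt d ^ (β - α)) *
        ENNReal.ofReal (Q.side ^ (β - α)) * choquetIntegral (hausdorffContent d α) Q.set f := by
  refine choquetIntegral_le_mul_of_le (by simp [ENNReal.mul_eq_top]) (fun S hS => ?_) f
  refine (hausdorffContent_le_of_subset_ball hα hαβ (mul_pos Q.side_pos sqrt_pos_of_neZero)
    (hS.trans Q.set_subset_ball)).trans_eq ?_
  rw [← ENNReal.ofReal_mul (ballConst_div_mul_rpow_pos hα hαβ sqrt_pos_of_neZero).le,
    Real.mul_rpow Q.side_pos.le (Real.sqrt_nonneg _)]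
  ring_nf

def meanOscillation (d : ℕ) (β : ℝ) (Q : Cube d) (u : Euc d → ℝ) : ℝ≥0∞ :=
  ⨅ c : ℝ, choquetIntegral (hausdorffContent d β) Q.set (fun x => |u x - c|) /
    ENNReal.ofReal (Q.side ^ β)

lemma meanOscillation_le (hα : 0 < α) (hαβ : α ≤ β) (Q : Cube d) (u : Euc d → ℝ) :
    meanOscillation d β Q u ≤
      ENNReal.ofReal (ballConst β / ballConst α * Real.sqrt d ^ (β - α)) *
        meanOscillation d α Q u := by
  set K := ENNReal.ofReal (ballConst β / ballConst α * Real.sqrt d ^ (β - α))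
  have hsα : ENNReal.ofReal (Q.side ^ α) ≠ 0 := by
    simpa using Real.rpow_pos_of_pos Q.side_pos α
  have hsplit : ENNReal.ofReal (Q.side ^ β) =
      ENNReal.ofReal (Q.side ^ (β - α)) * ENNReal.ofReal (Q.side ^ α) := by
    rw [← ENNReal.ofReal_mul (Real.rpow_nonneg Q.side_pos.le _), ← Real.rpow_add Q.side_pos,
      sub_add_cancel]
  rw [meanOscillation, meanOscillation, ENNReal.mul_iInf_of_ne
    (by simpa using ballConst_div_mul_rpow_pos hα hαβ sqrt_pos_of_neZero)
    ENNReal.ofReal_ne_top]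
  refine iInf_mono fun c => ENNReal.div_le_of_le_mul ?_
  set I := choquetIntegral (hausdorffContent d α) Q.set fun x => |u x - c|
  calc choquetIntegral (hausdorffContent d β) Q.set (fun x => |u x - c|)
      ≤ K * ENNReal.ofReal (Q.side ^ (β - α)) * I :=
        choquetIntegral_hausdorffContent_cube_le hα hαβ Q _
    _ = K * ENNReal.ofReal (Q.side ^ (β - α)) *
          (I / ENNReal.ofReal (Q.side ^ α) * ENNReal.ofReal (Q.side ^ α)) := by
        rw [ENNReal.div_mul_cancel hsα ENNReal.ofReal_ne_top]
    _ = K * (I / ENNReal.ofReal (Q.side ^ α)) * ENNReal.ofReal (Q.side ^ β) := by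
        rw [hsplit]
        ring

lemma bmoSeminorm_le (hα : 0 < α) (hαβ : α ≤ β) (Q₀ : Set (Euc d)) (u : Euc d → ℝ) :
    bmoSeminorm d β Q₀ u ≤
      ENNReal.ofReal (ballConst β / ballConst α * Real.sqrt d ^ (β - α)) *
        bmoSeminorm d α Q₀ u := by
  simp only [bmoSeminorm, ENNReal.mul_iSup]
  exact iSup₂_mono fun Q _ => meanOscillation_le hα hαβ Q u

end Cube

theorem bmo_nesting_general (d : ℕ) (hd : 1 ≤ d) (α β : ℝ) (hα : 0 < α) (hαβ : α ≤ β)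
    (Q₀ : Cube d) :
    ∃ C : ℝ, 0 < C ∧
      ∀ u : Euc d → ℝ, MemBMO d α Q₀.set u →
        MemBMO d β Q₀.set u ∧
        bmoSeminorm d β Q₀.set u ≤ ENNReal.ofReal C * bmoSeminorm d α Q₀.set u := by
  have : NeZero d := ⟨by omega⟩
  refine ⟨ballConst β / ballConst α * Real.sqrt d ^ (β - α),
    ballConst_div_mul_rpow_pos hα hαβ sqrt_pos_of_neZero, fun u ⟨⟨hqc, hint⟩, hsem⟩ => ?_⟩
  have hnorm := bmoSeminorm_le hα hαβ Q₀.set u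
  refine ⟨⟨⟨hqc.hausdorffContent_of_le hα hαβ, ?_⟩, hnorm.trans_lt ?_⟩, hnorm⟩
  · exact (choquetIntegral_hausdorffContent_cube_le hα hαβ Q₀ _).trans_lt
      (ENNReal.mul_lt_top (ENNReal.mul_lt_top ENNReal.ofReal_lt_top ENNReal.ofReal_lt_top) hint)
  · exact ENNReal.mul_lt_top ENNReal.ofReal_lt_top hsem

theorem bmo_nesting (d : ℕ) (hd : 1 ≤ d) (α β : ℝ) (hα : 0 < α) (hαβ : α ≤ β)
    (hβd : β ≤ (d : ℝ)) (Q₀ : Cube d) :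
    ∃ C : ℝ, 0 < C ∧
      ∀ u : Euc d → ℝ, MemBMO d α Q₀.set u →
        MemBMO d β Q₀.set u ∧
        bmoSeminorm d β Q₀.set u ≤ ENNReal.ofReal C * bmoSeminorm d α Q₀.set u :=
  bmo_nesting_general d hd α β hα hαβ Q₀

end
end

section
/- Let d ≥ 1, β ∈ (0,d], and let Q ⊂ ℝ^d be a cube. The dyadic Hausdorff content adapted to Q is strongly subadditive: for all sets E, F ⊂ ℝ^d, 𝓗^{β,Q}_∞(E ∪ F) + 𝓗^{β,Q}_∞(E ∩ F) ≤ 𝓗^{β,Q}_∞(E) + 𝓗^{β,Q}_∞(F). -/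
open Set MeasureTheory ENNReal NNReal Filter

noncomputable section

lemma interval_nest {u v p z : ℝ} (hp : 0 < p) (N : ℕ) (t : ℤ)
    (ht : u - v = (t : ℝ) * p)
    (h1 : v ≤ z) (h2 : z < u + p) (h3 : u ≤ z) (h4 : z < v + 2 ^ N * p) :
    v ≤ u ∧ u + p ≤ v + 2 ^ N * p := by
  have ht1 : (0:ℤ) ≤ t := by
    by_contra h
    push_neg at h
    have h'' : t ≤ -1 := by omega
    have h' : (t:ℝ) ≤ -1 := by exact_mod_cast h''
    nlinarith
  have ht2 : (t:ℝ) ≤ 2 ^ N - 1 := by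
    have : t ≤ 2 ^ N - 1 := by
      by_contra h
      push_neg at h
      have h'' : (2:ℤ) ^ N ≤ t := by omega
      have h' : ((2:ℝ)) ^ N ≤ (t:ℝ) := by exact_mod_cast h''
      nlinarith
    calc (t:ℝ) ≤ ((2^N - 1 : ℤ) : ℝ) := by exact_mod_cast this
    _ = 2 ^ N - 1 := by push_cast; ring
  have ht1' : (0:ℝ) ≤ (t:ℝ) := by exact_mod_cast ht1
  constructor
  · nlinarith
  · nlinarith

lemma dyadic_nested {d : ℕ} {Q A B : Cube d} (hA : A ∈ Q.dyadic) (hB : B ∈ Q.dyadic)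
    (hside : A.side ≤ B.side) {x : Euc d} (hxA : x ∈ A.set) (hxB : x ∈ B.set) :
    A.set ⊆ B.set := by
  obtain ⟨m, k, hms, hmc⟩ := hA
  obtain ⟨n, l, hns, hnc⟩ := hB
  have hQ := Q.side_pos
  have hmn : m ≤ n := by
    rw [hms, hns] at hside
    have h2 : (2:ℝ) ^ m ≤ 2 ^ n := le_of_mul_le_mul_left hside hQ
    exact (zpow_le_zpow_iff_right₀ (by norm_num : (1:ℝ) < 2)).mp h2
  set N : ℕ := (n - m).toNat with hN
  have h2n : (2:ℝ) ^ n = 2 ^ N * 2 ^ m := by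
    rw [hN, ← zpow_natCast (2:ℝ), Int.toNat_of_nonneg (by omega), ← zpow_add₀ (by norm_num : (2:ℝ) ≠ 0)]
    ring_nf
  have hp : (0:ℝ) < Q.side * 2 ^ m := by positivity
  have hq : Q.side * 2 ^ n = 2 ^ N * (Q.side * 2 ^ m) := by rw [h2n]; ring
  intro y hy
  intro i
  have hxAi := hxA i
  have hxBi := hxB i
  have hyi := hy i
  rw [hms, hmc i] at hxAi hyi
  rw [hns, hnc i] at hxBi
  have ht : (Q.corner i + (k i : ℝ) * (Q.side * 2 ^ m)) - (Q.corner i + (l i : ℝ) * (Q.side * 2 ^ n))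
      = ((k i - l i * 2 ^ N : ℤ) : ℝ) * (Q.side * 2 ^ m) := by
    push_cast
    rw [h2n]; ring
  have key := interval_nest hp N (k i - l i * 2 ^ N) ht hxBi.1
    hxAi.2 hxAi.1 (by rw [← hq]; exact hxBi.2)
  rw [hns, hnc i]
  constructor
  · linarith [key.1, hyi.1]
  · have h5 := key.2
    rw [← hq] at h5
    linarith [hyi.2]

namespace DSSA
open Classical

variable {d : ℕ}

/-- predicate: `a i` is strictly below some `b j`. -/
def TaP (a b : ℕ → Cube d) (i : ℕ) : Prop :=
  ∃ j, (a i).set ⊆ (b j).set ∧ (a i).side < (b j).side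

/-- predicate: `b j` is below some `a i`. -/
def TbP (a b : ℕ → Cube d) (j : ℕ) : Prop :=
  ∃ i, (b j).set ⊆ (a i).set ∧ (b j).side ≤ (a i).side

def combF (a b : ℕ → Cube d) (n : ℕ) : Cube d :=
  if n % 2 = 0 then a (n/2) else b (n/2)

def cSF (a b tiny : ℕ → Cube d) (n : ℕ) : Cube d :=
  if n % 2 = 0 then (if TaP a b (n/2) then tiny n else a (n/2))
  else (if TbP a b (n/2) then tiny n else b (n/2))

def cTF (a b tiny : ℕ → Cube d) (n : ℕ) : Cube d :=
  if n % 2 = 0 then (if TaP a b (n/2) then a (n/2) else tiny n)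
  else (if TbP a b (n/2) then b (n/2) else tiny n)

variable (a b tiny : ℕ → Cube d)

lemma combF_even (i : ℕ) : combF a b (2*i) = a i := by
  have e1 : (2*i) % 2 = 0 := by omega
  have e2 : (2*i) / 2 = i := by omega
  rw [combF, if_pos e1, e2]

lemma combF_odd (j : ℕ) : combF a b (2*j+1) = b j := by
  have e1 : ¬ ((2*j+1) % 2 = 0) := by omega
  have e2 : (2*j+1) / 2 = j := by omega
  rw [combF, if_neg e1, e2]

lemma cSF_even_pos {i : ℕ} (h : TaP a b i) : cSF a b tiny (2*i) = tiny (2*i) := by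
  have e1 : (2*i) % 2 = 0 := by omega
  have e2 : (2*i) / 2 = i := by omega
  rw [cSF, if_pos e1, e2, if_pos h]

lemma cSF_even_neg {i : ℕ} (h : ¬ TaP a b i) : cSF a b tiny (2*i) = a i := by
  have e1 : (2*i) % 2 = 0 := by omega
  have e2 : (2*i) / 2 = i := by omega
  rw [cSF, if_pos e1, e2, if_neg h]

lemma cSF_odd_neg {j : ℕ} (h : ¬ TbP a b j) : cSF a b tiny (2*j+1) = b j := by
  have e1 : ¬ ((2*j+1) % 2 = 0) := by omega
  have e2 : (2*j+1) / 2 = j := by omega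
  rw [cSF, if_neg e1, e2, if_neg h]

lemma cTF_even_pos {i : ℕ} (h : TaP a b i) : cTF a b tiny (2*i) = a i := by
  have e1 : (2*i) % 2 = 0 := by omega
  have e2 : (2*i) / 2 = i := by omega
  rw [cTF, if_pos e1, e2, if_pos h]

lemma cTF_odd_pos {j : ℕ} (h : TbP a b j) : cTF a b tiny (2*j+1) = b j := by
  have e1 : ¬ ((2*j+1) % 2 = 0) := by omega
  have e2 : (2*j+1) / 2 = j := by omega
  rw [cTF, if_neg e1, e2, if_pos h]

lemma combF_mem {Q : Cube d} (ha : ∀ i, a i ∈ Q.dyadic) (hb : ∀ j, b j ∈ Q.dyadic) (n : ℕ) :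
    combF a b n ∈ Q.dyadic := by
  rw [combF]; split <;> [exact ha _; exact hb _]

lemma cSF_mem {Q : Cube d} (ha : ∀ i, a i ∈ Q.dyadic) (hb : ∀ j, b j ∈ Q.dyadic)
    (ht : ∀ n, tiny n ∈ Q.dyadic) (n : ℕ) : cSF a b tiny n ∈ Q.dyadic := by
  rw [cSF]; split <;> split <;> first | exact ha _ | exact hb _ | exact ht _

lemma cTF_mem {Q : Cube d} (ha : ∀ i, a i ∈ Q.dyadic) (hb : ∀ j, b j ∈ Q.dyadic)
    (ht : ∀ n, tiny n ∈ Q.dyadic) (n : ℕ) : cTF a b tiny n ∈ Q.dyadic := by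
  rw [cTF]; split <;> split <;> first | exact ha _ | exact hb _ | exact ht _

lemma point_split (β : ℝ) (n : ℕ) :
    ENNReal.ofReal ((cSF a b tiny n).side ^ β) + ENNReal.ofReal ((cTF a b tiny n).side ^ β)
      = ENNReal.ofReal ((combF a b n).side ^ β) + ENNReal.ofReal ((tiny n).side ^ β) := by
  rw [cSF, cTF, combF]
  split <;> split <;> first | exact add_comm _ _ | rfl


section Cover
variable {β : ℝ} {Q : Cube d} {E F : Set (Euc d)}

lemma covT (ha : ∀ i, a i ∈ Q.dyadic) (hb : ∀ j, b j ∈ Q.dyadic)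
    (haE : E ⊆ ⋃ i, (a i).set) (hbF : F ⊆ ⋃ j, (b j).set) :
    E ∩ F ⊆ ⋃ n, (cTF a b tiny n).set := by
  rintro x ⟨hxE, hxF⟩
  obtain ⟨i, hxi⟩ := Set.mem_iUnion.mp (haE hxE)
  obtain ⟨j, hxj⟩ := Set.mem_iUnion.mp (hbF hxF)
  rcases lt_or_ge (a i).side (b j).side with h | h
  · have hsub := dyadic_nested (ha i) (hb j) h.le hxi hxj
    exact Set.mem_iUnion.mpr ⟨2*i, by rw [cTF_even_pos a b tiny ⟨j, hsub, h⟩]; exact hxi⟩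
  · have hsub := dyadic_nested (hb j) (ha i) h hxj hxi
    exact Set.mem_iUnion.mpr ⟨2*j+1, by rw [cTF_odd_pos a b tiny ⟨i, hsub, h⟩]; exact hxj⟩

lemma covS {C : ℝ} (ha : ∀ i, a i ∈ Q.dyadic) (hb : ∀ j, b j ∈ Q.dyadic)
    (haE : E ⊆ ⋃ i, (a i).set) (hbF : F ⊆ ⋃ j, (b j).set)
    (hbound : ∀ n, (combF a b n).side ≤ C) :
    E ∪ F ⊆ ⋃ n, (cSF a b tiny n).set := by
  intro x hx
  have hQ := Q.side_pos
  set P : ℤ → Prop := fun m => ∃ n : ℕ, x ∈ (combF a b n).set ∧ (combF a b n).side = Q.side * 2 ^ m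
    with hPdef
  have hne : ∃ m, P m := by
    rcases hx with hxE | hxF
    · obtain ⟨i, hxi⟩ := Set.mem_iUnion.mp (haE hxE)
      obtain ⟨m, k, hm, -⟩ := ha i
      exact ⟨m, 2*i, by rw [combF_even a b i]; exact hxi, by rw [combF_even a b i]; exact hm⟩
    · obtain ⟨j, hxj⟩ := Set.mem_iUnion.mp (hbF hxF)
      obtain ⟨m, k, hm, -⟩ := hb j
      exact ⟨m, 2*j+1, by rw [combF_odd a b j]; exact hxj, by rw [combF_odd a b j]; exact hm⟩
  have hbdd : ∀ m, P m → m ≤ Int.log 2 (C / Q.side) := by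
    rintro m ⟨n, -, hside⟩
    have h2 : Q.side * 2 ^ m ≤ C := hside ▸ hbound n
    have h5 : (2:ℝ) ^ m ≤ C / Q.side := by
      rw [le_div_iff₀ hQ]
      linarith
    have h6 : (0:ℝ) < C / Q.side := lt_of_lt_of_le (zpow_pos (by norm_num) m) h5
    have h7 : ((2:ℕ) : ℝ) ^ m ≤ C / Q.side := by exact_mod_cast h5
    exact (Int.zpow_le_iff_le_log (by norm_num) h6).mp h7
  obtain ⟨m0, ⟨n0, hxn0, hn0side⟩, hm0max⟩ :=
    Int.exists_greatest_of_bdd ⟨Int.log 2 (C / Q.side), hbdd⟩ hne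
  have hmax : ∀ n : ℕ, x ∈ (combF a b n).set → (combF a b n).side ≤ (combF a b n0).side := by
    intro n hxn
    obtain ⟨m, km, hmside, -⟩ := combF_mem a b ha hb n
    have hmm : m ≤ m0 := hm0max m ⟨n, hxn, hmside⟩
    rw [hmside, hn0side]
    exact mul_le_mul_of_nonneg_left (zpow_le_zpow_right₀ one_le_two hmm) hQ.le
  by_cases h0 : n0 % 2 = 0
  · obtain ⟨i, hi⟩ : ∃ i, n0 = 2*i := ⟨n0/2, by omega⟩
    subst hi
    rw [combF_even a b i] at hxn0
    have hnotTa : ¬ TaP a b i := by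
      rintro ⟨j, hsub, hlt⟩
      have h2 := hmax (2*j+1) (by rw [combF_odd a b j]; exact hsub hxn0)
      rw [combF_odd a b j, combF_even a b i] at h2
      linarith
    exact Set.mem_iUnion.mpr ⟨2*i, by rw [cSF_even_neg a b tiny hnotTa]; exact hxn0⟩
  · obtain ⟨j, hj⟩ : ∃ j, n0 = 2*j+1 := ⟨n0/2, by omega⟩
    subst hj
    rw [combF_odd a b j] at hxn0
    by_cases hTbj : TbP a b j
    · obtain ⟨i, hsub, hle⟩ := hTbj
      have hxi : x ∈ (a i).set := hsub hxn0
      have h1 : (a i).side ≤ (b j).side := by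
        have h2 := hmax (2*i) (by rw [combF_even a b i]; exact hxi)
        rwa [combF_even a b i, combF_odd a b j] at h2
      have hnotTa : ¬ TaP a b i := by
        rintro ⟨j', hsub', hlt'⟩
        have h2 := hmax (2*j'+1) (by rw [combF_odd a b j']; exact hsub' hxi)
        rw [combF_odd a b j', combF_odd a b j] at h2
        linarith
      exact Set.mem_iUnion.mpr ⟨2*i, by rw [cSF_even_neg a b tiny hnotTa]; exact hxi⟩
    · exact Set.mem_iUnion.mpr ⟨2*j+1, by rw [cSF_odd_neg a b tiny hTbj]; exact hxn0⟩

lemma combF_tsum (β : ℝ) :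
    ∑' n, ENNReal.ofReal ((combF a b n).side ^ β)
      = (∑' i, ENNReal.ofReal ((a i).side ^ β)) + ∑' j, ENNReal.ofReal ((b j).side ^ β) := by
  have h1 : HasSum (fun k => ENNReal.ofReal ((combF a b (2*k)).side ^ β))
      (∑' i, ENNReal.ofReal ((a i).side ^ β)) := by
    have heq : (fun k => ENNReal.ofReal ((combF a b (2*k)).side ^ β))
        = fun k => ENNReal.ofReal ((a k).side ^ β) := funext fun k => by rw [combF_even a b k]
    rw [heq]
    exact ENNReal.summable.hasSum
  have h2 : HasSum (fun k => ENNReal.ofReal ((combF a b (2*k+1)).side ^ β))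
      (∑' j, ENNReal.ofReal ((b j).side ^ β)) := by
    have heq : (fun k => ENNReal.ofReal ((combF a b (2*k+1)).side ^ β))
        = fun k => ENNReal.ofReal ((b k).side ^ β) := funext fun k => by rw [combF_odd a b k]
    rw [heq]
    exact ENNReal.summable.hasSum
  exact (HasSum.even_add_odd (f := fun n => ENNReal.ofReal ((combF a b n).side ^ β)) h1 h2).tsum_eq

end Cover
end DSSA

lemma content_le_sum {d : ℕ} {β : ℝ} {Q : Cube d} {E : Set (Euc d)} (c : ℕ → Cube d)
    (h1 : ∀ i, c i ∈ Q.dyadic) (h2 : E ⊆ ⋃ i, (c i).set) :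
    dyadicContent d β Q E ≤ ∑' i, ENNReal.ofReal ((c i).side ^ β) :=
  iInf_le_of_le c (iInf_le_of_le h1 (iInf_le_of_le h2 le_rfl))

lemma exists_cover {d : ℕ} {β : ℝ} {Q : Cube d} {E : Set (Euc d)} {L : ℝ≥0∞}
    (h : dyadicContent d β Q E < L) :
    ∃ c : ℕ → Cube d, (∀ i, c i ∈ Q.dyadic) ∧ (E ⊆ ⋃ i, (c i).set) ∧
      ∑' i, ENNReal.ofReal ((c i).side ^ β) < L := by
  simp only [dyadicContent, iInf_lt_iff] at h
  obtain ⟨c, h1, h2, h3⟩ := h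
  exact ⟨c, h1, h2, h3⟩

lemma exists_tiny {d : ℕ} {β : ℝ} (hβ : 0 < β) (Q : Cube d) {δ : ℝ} (hδ : 0 < δ) :
    ∃ C : Cube d, C ∈ Q.dyadic ∧ C.side ^ β ≤ δ := by
  have h2 : ((1/2:ℝ))^β < 1 := Real.rpow_lt_one (by norm_num) (by norm_num) hβ
  have hQβ : 0 < Q.side ^ β := Real.rpow_pos_of_pos Q.side_pos β
  obtain ⟨n, hn⟩ := exists_pow_lt_of_lt_one (div_pos hδ hQβ) h2
  have hQ := Q.side_pos
  refine ⟨⟨Q.corner, Q.side * 2 ^ (-(n:ℤ)), by positivity⟩, ⟨-(n:ℤ), 0, rfl, fun i => by simp⟩, ?_⟩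
  have hside : Q.side * (2:ℝ) ^ (-(n:ℤ)) = Q.side * (1/2)^n := by
    rw [zpow_neg, zpow_natCast, one_div, inv_pow]
  show (Q.side * (2:ℝ) ^ (-(n:ℤ))) ^ β ≤ δ
  rw [hside]
  have hcalc : (Q.side * (1/2:ℝ)^n) ^ β = Q.side ^ β * ((1/2:ℝ)^β)^n := by
    rw [Real.mul_rpow hQ.le (by positivity), ← Real.rpow_natCast (1/2:ℝ) n,
      ← Real.rpow_natCast ((1/2:ℝ)^β) n, ← Real.rpow_mul (by norm_num),
      ← Real.rpow_mul (by norm_num), mul_comm β (n:ℝ)]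
  rw [hcalc]
  calc Q.side ^ β * ((1/2:ℝ)^β)^n ≤ Q.side ^ β * (δ / Q.side ^ β) :=
        mul_le_mul_of_nonneg_left hn.le hQβ.le
    _ = δ := by field_simp


theorem dyadicContent_strongly_subadditive (d : ℕ) (hd : 1 ≤ d) (β : ℝ) (hβ : 0 < β)
    (hβd : β ≤ (d : ℝ)) (Q : Cube d) (E F : Set (Euc d)) :
    dyadicContent d β Q (E ∪ F) + dyadicContent d β Q (E ∩ F) ≤
      dyadicContent d β Q E + dyadicContent d β Q F := by
  classical
  refine ENNReal.le_of_forall_pos_le_add fun ε hε hfin => ?_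
  have hCE : dyadicContent d β Q E ≠ ⊤ := (lt_of_le_of_lt le_self_add hfin).ne
  have hCF : dyadicContent d β Q F ≠ ⊤ := (lt_of_le_of_lt le_add_self hfin).ne
  have hεpos : (0:ℝ) < (ε:ℝ) := hε
  have h4 : (0:ℝ) < (ε:ℝ)/4 := by positivity
  have h4' : ENNReal.ofReal ((ε:ℝ)/4) ≠ 0 := (ENNReal.ofReal_pos.mpr h4).ne'
  obtain ⟨a, ha, haE, hsa⟩ := exists_cover (ENNReal.lt_add_right hCE h4')
  obtain ⟨b, hb, hbF, hsb⟩ := exists_cover (ENNReal.lt_add_right hCF h4')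
  have htinyex : ∀ n : ℕ, ∃ C : Cube d, C ∈ Q.dyadic ∧ C.side ^ β ≤ (ε:ℝ)/4 * (1/2)^n :=
    fun n => exists_tiny hβ Q (by positivity)
  choose tiny htinyD htinyS using htinyex
  set Sa : ℝ≥0∞ := ∑' i, ENNReal.ofReal ((a i).side ^ β) with hSa
  set Sb : ℝ≥0∞ := ∑' j, ENNReal.ofReal ((b j).side ^ β) with hSb
  have hSafin : Sa ≠ ⊤ := (hsa.trans (ENNReal.add_lt_top.mpr ⟨hCE.lt_top, ENNReal.ofReal_lt_top⟩)).ne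
  have hSbfin : Sb ≠ ⊤ := (hsb.trans (ENNReal.add_lt_top.mpr ⟨hCF.lt_top, ENNReal.ofReal_lt_top⟩)).ne
  have hBfin : Sa + Sb ≠ ⊤ := by
    simp [ENNReal.add_ne_top, hSafin, hSbfin]
  have hsidebound : ∀ n, (DSSA.combF a b n).side ≤ ((Sa+Sb).toReal) ^ β⁻¹ := by
    intro n
    have h1 : ENNReal.ofReal ((DSSA.combF a b n).side ^ β) ≤ Sa + Sb := by
      rw [DSSA.combF]
      split
      · calc ENNReal.ofReal ((a (n/2)).side ^ β) ≤ Sa := by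
              rw [hSa]; exact ENNReal.le_tsum _
          _ ≤ Sa + Sb := le_self_add
      · calc ENNReal.ofReal ((b (n/2)).side ^ β) ≤ Sb := by
              rw [hSb]; exact ENNReal.le_tsum _
          _ ≤ Sa + Sb := le_add_self
    have h1' := (ENNReal.ofReal_le_iff_le_toReal hBfin).mp h1
    have hsp := (DSSA.combF a b n).side_pos
    have h3 := Real.rpow_le_rpow (Real.rpow_nonneg hsp.le β) h1' (inv_nonneg.mpr hβ.le)
    rwa [← Real.rpow_mul hsp.le, mul_inv_cancel₀ hβ.ne', Real.rpow_one] at h3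
  have hcovS := DSSA.covS a b tiny ha hb haE hbF hsidebound
  have hcovT := DSSA.covT a b tiny ha hb haE hbF
  have hS := content_le_sum (β := β) _ (DSSA.cSF_mem a b tiny ha hb htinyD) hcovS
  have hT := content_le_sum (β := β) _ (DSSA.cTF_mem a b tiny ha hb htinyD) hcovT
  have htinysum : ∑' n, ENNReal.ofReal ((tiny n).side ^ β) ≤ ENNReal.ofReal ((ε:ℝ)/2) := by
    have hsummable : Summable (fun n : ℕ => (ε:ℝ)/4 * (1/2:ℝ)^n) :=
      (summable_geometric_of_lt_one (by norm_num) (by norm_num)).mul_left _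
    calc ∑' n, ENNReal.ofReal ((tiny n).side ^ β)
        ≤ ∑' n : ℕ, ENNReal.ofReal ((ε:ℝ)/4 * (1/2)^n) :=
          ENNReal.tsum_le_tsum fun n => ENNReal.ofReal_le_ofReal (htinyS n)
      _ = ENNReal.ofReal (∑' n : ℕ, (ε:ℝ)/4 * (1/2)^n) :=
          (ENNReal.ofReal_tsum_of_nonneg (fun n => by positivity) hsummable).symm
      _ = ENNReal.ofReal ((ε:ℝ)/2) := by
          rw [_root_.tsum_mul_left, tsum_geometric_of_lt_one (by norm_num) (by norm_num)]
          norm_num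
          rw [show (ε:ℝ)/4 * 2 = (ε:ℝ)/2 by ring]
  calc dyadicContent d β Q (E ∪ F) + dyadicContent d β Q (E ∩ F)
      ≤ (∑' n, ENNReal.ofReal ((DSSA.cSF a b tiny n).side ^ β))
          + ∑' n, ENNReal.ofReal ((DSSA.cTF a b tiny n).side ^ β) := add_le_add hS hT
    _ = (∑' n, ENNReal.ofReal ((DSSA.combF a b n).side ^ β))
          + ∑' n, ENNReal.ofReal ((tiny n).side ^ β) := by
        rw [← ENNReal.tsum_add, ← ENNReal.tsum_add]
        exact tsum_congr (DSSA.point_split a b tiny β)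
    _ = (Sa + Sb) + ∑' n, ENNReal.ofReal ((tiny n).side ^ β) := by
        rw [DSSA.combF_tsum a b β]
    _ ≤ ((dyadicContent d β Q E + ENNReal.ofReal ((ε:ℝ)/4))
          + (dyadicContent d β Q F + ENNReal.ofReal ((ε:ℝ)/4))) + ENNReal.ofReal ((ε:ℝ)/2) :=
        add_le_add (add_le_add hsa.le hsb.le) htinysum
    _ = (dyadicContent d β Q E + dyadicContent d β Q F)
          + (ENNReal.ofReal ((ε:ℝ)/4) + ENNReal.ofReal ((ε:ℝ)/4) + ENNReal.ofReal ((ε:ℝ)/2)) := by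
        ring
    _ = dyadicContent d β Q E + dyadicContent d β Q F + ε := by
        rw [← ENNReal.ofReal_add (by positivity) (by positivity),
          ← ENNReal.ofReal_add (by positivity) (by positivity)]
        rw [show (ε:ℝ)/4 + (ε:ℝ)/4 + (ε:ℝ)/2 = (ε:ℝ) by ring]
        rw [ENNReal.ofReal_coe_nnreal]


end
end

section
/- Let d ≥ 1, β ∈ (0,d], and let Q ⊂ ℝ^d be a cube. There exists a constant C' > 0 depending only on β and d such that: whenever {Q_k} is a countable family of pairwise non-overlapping cubes in 𝓓(Q) satisfying the packing condition Σ_{k : Q_k ⊂ Q'} l(Q_k)^β ≤ 2 l(Q')^β for every cube Q' ∈ 𝓓(Q), then for every nonnegative f ∈ L¹(∪_k Q_k; 𝓗^{β,Q}_∞) one has Σ_k ∫_{Q_k} f d𝓗^{β,Q}_∞ ≤ C' ∫_{∪_k Q_k} f d𝓗^{β,Q}_∞. -/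
open Set MeasureTheory ENNReal NNReal Filter

noncomputable section

/-!
Everything happens on a single level set `A`. Take a dyadic cover `(c j)` of `A`. Since two
dyadic cubes are nested or disjoint, each `q ∈ F` is either contained in some `c j`, and then
`𝓗(A ∩ q) ≤ l(q)^β`, or `A ∩ q` is covered by the `c j ⊆ q` alone. Summed over `q`, the first
kind contributes at most `∑ⱼ ∑_{q ⊆ c j} l(q)^β ≤ 2 ∑ⱼ l(c j)^β` by the packing condition, and
the second at most `∑ⱼ l(c j)^β`, as cubes of `F` have disjoint interiors and so each `c j` lies
in at most one of them. Hence `∑_q 𝓗(A ∩ q) ≤ 3 𝓗(A)`, and integrating over the level sets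
`A = {f > t}` gives the theorem with `C' = 3`.
-/

open Topology

lemma tsum_choquetIntegral_le {X ι : Type*} [Countable ι] {H : Set X → ℝ≥0∞} (hH : Monotone H)
    {S : ι → Set X} {C : ℝ≥0∞} (hC : ∀ A, ∑' i, H (A ∩ S i) ≤ C * H A) (f : X → ℝ) :
    ∑' i, choquetIntegral H (S i) f ≤ C * choquetIntegral H (⋃ i, S i) f := by
  have hmeas : ∀ A : Set X, Measurable fun t : ℝ => H {x | x ∈ A ∧ t < f x} := fun A =>
    Antitone.measurable fun s t hst => hH fun x hx => ⟨hx.1, hst.trans_lt hx.2⟩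
  have hlevel : ∀ i t, {x | x ∈ S i ∧ t < f x} ⊆ {x | x ∈ ⋃ i, S i ∧ t < f x} ∩ S i :=
    fun i _ x hx => ⟨⟨mem_iUnion_of_mem i hx.1, hx.2⟩, hx.1⟩
  calc ∑' i, choquetIntegral H (S i) f
      = ∫⁻ t in Ioi 0, ∑' i, H {x | x ∈ S i ∧ t < f x} :=
        (lintegral_tsum fun i => (hmeas (S i)).aemeasurable).symm
    _ ≤ ∫⁻ t in Ioi 0, C * H {x | x ∈ ⋃ i, S i ∧ t < f x} := lintegral_mono fun t =>
        (ENNReal.tsum_le_tsum fun i => hH (hlevel i t)).trans (hC _)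
    _ = C * choquetIntegral H (⋃ i, S i) f := lintegral_const_mul C (hmeas _)

lemma Int.floor_sub_div_eq_iff {K : Type*} [Field K] [LinearOrder K] [IsStrictOrderedRing K]
    [FloorRing K] {a h t : K} (hh : 0 < h) (k : ℤ) :
    ⌊(t - a) / h⌋ = k ↔ a + k * h ≤ t ∧ t < a + k * h + h := by
  rw [Int.floor_eq_iff, le_div_iff₀ hh, div_lt_iff₀ hh]
  constructor <;> rintro ⟨h₁, h₂⟩ <;> constructor <;> linarith

namespace Cube

variable {d : ℕ}

lemma mem_set_iff_floor {Q q : Cube d} {n : ℤ} {k : Fin d → ℤ} (hside : q.side = Q.side * 2 ^ n)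
    (hcorner : ∀ i, q.corner i = Q.corner i + k i * (Q.side * 2 ^ n)) {x : Euc d} :
    x ∈ q.set ↔ ∀ i, ⌊(x i - Q.corner i) / (Q.side * 2 ^ n)⌋ = k i := by
  have hpos : 0 < Q.side * (2 : ℝ) ^ n := by have := Q.side_pos; positivity
  simp only [Cube.set, mem_ofPred_eq, hcorner, hside, Int.floor_sub_div_eq_iff hpos]

lemma set_subset_of_mem_dyadic_of_side_le {Q q₁ q₂ : Cube d} (h₁ : q₁ ∈ Q.dyadic)
    (h₂ : q₂ ∈ Q.dyadic) (hle : q₁.side ≤ q₂.side) {x : Euc d} (hx₁ : x ∈ q₁.set)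
    (hx₂ : x ∈ q₂.set) : q₁.set ⊆ q₂.set := by
  obtain ⟨n, k, hn, hk⟩ := h₁
  obtain ⟨m, l, hm, hl⟩ := h₂
  have hnm : n ≤ m := by
    rw [hn, hm, mul_le_mul_iff_right₀ Q.side_pos] at hle
    exact (zpow_le_zpow_iff_right₀ (one_lt_two : (1 : ℝ) < 2)).mp hle
  have hscale : Q.side * (2 : ℝ) ^ m = Q.side * 2 ^ n * ((2 ^ (m - n).toNat : ℕ) : ℝ) := by
    rw [mul_assoc, Nat.cast_pow, Nat.cast_ofNat, ← zpow_natCast, Int.toNat_of_nonneg (by omega),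
      ← zpow_add₀ two_ne_zero, add_sub_cancel]
  intro y hy
  rw [mem_set_iff_floor hn hk] at hx₁ hy
  rw [mem_set_iff_floor hm hl] at hx₂ ⊢
  intro i
  rw [← hx₂ i, hscale, ← div_div _ (Q.side * 2 ^ n), ← div_div _ (Q.side * 2 ^ n),
    Int.floor_div_natCast, Int.floor_div_natCast, hx₁ i, hy i]

lemma set_subset_or_subset_of_mem_dyadic {Q q₁ q₂ : Cube d} (h₁ : q₁ ∈ Q.dyadic)
    (h₂ : q₂ ∈ Q.dyadic) (h : (q₁.set ∩ q₂.set).Nonempty) :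
    q₁.set ⊆ q₂.set ∨ q₂.set ⊆ q₁.set := by
  obtain ⟨x, hx₁, hx₂⟩ := h
  rcases le_total q₁.side q₂.side with hle | hle
  · exact .inl (set_subset_of_mem_dyadic_of_side_le h₁ h₂ hle hx₁ hx₂)
  · exact .inr (set_subset_of_mem_dyadic_of_side_le h₂ h₁ hle hx₂ hx₁)

lemma interior_set_nonempty (q : Cube d) : (interior q.set).Nonempty := by
  let box : Set (Euc d) := ⋂ i, (fun x : Euc d => x i) ⁻¹' Ioo (q.corner i) (q.corner i + q.side)
  have hbox : IsOpen box :=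
    isOpen_iInter_of_finite fun i => isOpen_Ioo.preimage (EuclideanSpace.proj i).continuous
  have hsub : box ⊆ q.set := fun x hx i => by
    have := mem_iInter.mp hx i
    exact ⟨this.1.le, this.2⟩
  refine ⟨WithLp.toLp 2 fun i => q.corner i + q.side / 2, interior_maximal hsub hbox ?_⟩
  have := q.side_pos
  exact mem_iInter.mpr fun i => ⟨by simp; linarith, by simp; linarith⟩

lemma exists_mem_dyadic_rpow_side_lt {β : ℝ} (hβ : 0 < β) (Q : Cube d) {δ : ℝ} (hδ : 0 < δ) :
    ∃ q ∈ Q.dyadic, q.side ^ β < δ := by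
  have hlim : Tendsto (fun m : ℕ => (Q.side * 2⁻¹ ^ m) ^ β) atTop (𝓝 0) := by
    have h := (tendsto_pow_atTop_nhds_zero_of_lt_one (by norm_num) (by norm_num :
      (2 : ℝ)⁻¹ < 1)).const_mul Q.side
    rw [mul_zero] at h
    simpa [Real.zero_rpow hβ.ne', Function.comp_def] using
      (Real.continuousAt_rpow_const 0 β (.inr hβ.le)).tendsto.comp h
  obtain ⟨m, hm⟩ := (hlim.eventually (gt_mem_nhds hδ)).exists
  have := Q.side_pos
  exact ⟨⟨Q.corner, Q.side * 2⁻¹ ^ m, by positivity⟩,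
    ⟨-m, 0, by simp [zpow_neg, inv_pow], fun i => by simp⟩, hm⟩

end Cube

section DyadicContent

variable {d : ℕ} {β : ℝ} {Q : Cube d}

lemma dyadicContent_mono : Monotone (dyadicContent d β Q) :=
  fun _ _ h => le_iInf₂ fun c hc => le_iInf fun hcov =>
    iInf₂_le_of_le c hc (iInf_le _ (h.trans hcov))

lemma exists_dyadic_seq_tsum_lt (hβ : 0 < β) (Q : Cube d) {ε : ℝ≥0∞} (hε : ε ≠ 0) :
    ∃ g : ℕ → Cube d, (∀ i, g i ∈ Q.dyadic) ∧ ∑' i, ENNReal.ofReal ((g i).side ^ β) < ε := by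
  obtain ⟨δ, hδ, hδε⟩ := ENNReal.exists_pos_sum_of_countable hε ℕ
  choose g hg hgδ using fun i => Q.exists_mem_dyadic_rpow_side_lt hβ (hδ i)
  refine ⟨g, hg, lt_of_le_of_lt (ENNReal.tsum_le_tsum fun i => ?_) hδε⟩
  rw [← ENNReal.ofReal_coe_nnreal]
  exact ENNReal.ofReal_le_ofReal (hgδ i).le

/-- The cover is padded to a sequence by dyadic cubes of negligible total mass, which exist
because `0 < β`. -/
lemma dyadicContent_le_tsum (hβ : 0 < β) {ι : Type*} [Countable ι] {c : ι → Cube d}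
    (hc : ∀ i, c i ∈ Q.dyadic) {E : Set (Euc d)} (hE : E ⊆ ⋃ i, (c i).set) :
    dyadicContent d β Q E ≤ ∑' i, ENNReal.ofReal ((c i).side ^ β) := by
  refine ENNReal.le_of_forall_pos_le_add fun ε hε _ => ?_
  obtain ⟨g, hg, hgε⟩ := exists_dyadic_seq_tsum_lt hβ Q (ENNReal.coe_ne_zero.mpr hε.ne')
  obtain ⟨e, he⟩ := Countable.exists_injective_nat ι
  let w : Cube d → ℝ≥0∞ := fun q => ENNReal.ofReal (q.side ^ β)
  have hmem : ∀ n, Function.extend e c g n ∈ Q.dyadic := fun n => by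
    by_cases hn : ∃ i, e i = n
    · obtain ⟨i, rfl⟩ := hn
      rw [he.extend_apply]
      exact hc i
    · rw [Function.extend_apply' _ _ _ hn]
      exact hg n
  have hcov : E ⊆ ⋃ n, (Function.extend e c g n).set := fun x hx => by
    obtain ⟨i, hi⟩ := mem_iUnion.mp (hE hx)
    exact mem_iUnion.mpr ⟨e i, by rwa [he.extend_apply]⟩
  have hterm : ∀ n, w (Function.extend e c g n) ≤ Function.extend e (w ∘ c) 0 n + w (g n) := by
    intro n
    by_cases hn : ∃ i, e i = n
    · obtain ⟨i, rfl⟩ := hn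
      simp only [he.extend_apply, Function.comp_apply, le_self_add]
    · simp only [Function.extend_apply' _ _ _ hn, Pi.zero_apply, zero_add, le_refl]
  calc dyadicContent d β Q E ≤ ∑' n, w (Function.extend e c g n) :=
        iInf₂_le_of_le _ hmem (iInf_le _ hcov)
    _ ≤ ∑' n, (Function.extend e (w ∘ c) 0 n + w (g n)) := ENNReal.tsum_le_tsum hterm
    _ ≤ ∑' i, w (c i) + ε := by
        rw [ENNReal.tsum_add, tsum_extend_zero he]
        exact add_le_add le_rfl hgε.le

lemma dyadicContent_le_rpow_side (hβ : 0 < β) {q : Cube d} (hq : q ∈ Q.dyadic)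
    {E : Set (Euc d)} (hE : E ⊆ q.set) : dyadicContent d β Q E ≤ ENNReal.ofReal (q.side ^ β) := by
  simpa using dyadicContent_le_tsum (ι := Unit) hβ (fun _ => hq)
    (hE.trans (subset_iUnion (fun _ => q.set) ()))

end DyadicContent

section Packing

open Classical

variable {d : ℕ} {β : ℝ} {Q : Cube d}

lemma tsum_ite_subset_le_of_pairwise_disjoint {F : Set (Cube d)}
    (hdisj : F.Pairwise fun q₁ q₂ => Disjoint (interior q₁.set) (interior q₂.set))
    (R : Cube d) (w : ℝ≥0∞) : ∑' q : F, (if R.set ⊆ (q : Cube d).set then w else 0) ≤ w := by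
  by_cases h : ∃ q₀ : F, R.set ⊆ (q₀ : Cube d).set
  · obtain ⟨q₀, hq₀⟩ := h
    obtain ⟨x, hx⟩ := R.interior_set_nonempty
    rw [tsum_eq_single q₀ fun q hq => if_neg fun hRq => hq (Subtype.ext (by_contra fun hne =>
      not_disjoint_iff.mpr ⟨x, interior_mono hRq hx, interior_mono hq₀ hx⟩ (hdisj q.2 q₀.2 hne))),
      if_pos hq₀]
  · push Not at h
    simp only [h, if_false, tsum_zero, zero_le]

lemma dyadicContent_inter_le (hβ : 0 < β) {c : ℕ → Cube d} (hc : ∀ j, c j ∈ Q.dyadic)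
    {A : Set (Euc d)} (hA : A ⊆ ⋃ j, (c j).set) {q : Cube d} (hq : q ∈ Q.dyadic) :
    dyadicContent d β Q (A ∩ q.set) ≤
      ∑' j, ((if q.set ⊆ (c j).set then ENNReal.ofReal (q.side ^ β) else 0) +
        if (c j).set ⊆ q.set then ENNReal.ofReal ((c j).side ^ β) else 0) := by
  by_cases h : ∃ j, q.set ⊆ (c j).set
  · obtain ⟨j, hj⟩ := h
    calc dyadicContent d β Q (A ∩ q.set) ≤ ENNReal.ofReal (q.side ^ β) :=
          dyadicContent_le_rpow_side hβ hq inter_subset_right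
      _ ≤ _ := by
          refine le_trans ?_ (ENNReal.le_tsum j)
          rw [if_pos hj]
          exact le_self_add
  · push Not at h
    have hcov : A ∩ q.set ⊆ ⋃ j : {j // (c j).set ⊆ q.set}, (c j).set := fun x hx => by
      obtain ⟨j, hj⟩ := mem_iUnion.mp (hA hx.1)
      have hsub := (Cube.set_subset_or_subset_of_mem_dyadic (hc j) hq ⟨x, hj, hx.2⟩).resolve_right
        (h j)
      exact mem_iUnion.mpr ⟨⟨j, hsub⟩, hj⟩
    calc dyadicContent d β Q (A ∩ q.set)
        ≤ ∑' j : {j // (c j).set ⊆ q.set}, ENNReal.ofReal ((c j).side ^ β) :=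
          dyadicContent_le_tsum (c := fun j : {j // (c j).set ⊆ q.set} => c j) hβ (fun j => hc j)
            hcov
      _ = ∑' j, if (c j).set ⊆ q.set then ENNReal.ofReal ((c j).side ^ β) else 0 :=
          tsum_subtype {j | (c j).set ⊆ q.set} (fun j => ENNReal.ofReal ((c j).side ^ β))
      _ ≤ _ := ENNReal.tsum_le_tsum fun j => le_add_self

lemma tsum_dyadicContent_inter_le (hβ : 0 < β) {F : Set (Cube d)} (hFd : ∀ q ∈ F, q ∈ Q.dyadic)
    (hdisj : F.Pairwise fun q₁ q₂ => Disjoint (interior q₁.set) (interior q₂.set))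
    (hpack : ∀ Q' : Cube d, Q' ∈ Q.dyadic →
      (∑' q : {q : Cube d // q ∈ F ∧ q.set ⊆ Q'.set}, ENNReal.ofReal (q.1.side ^ β)) ≤
        ENNReal.ofReal (2 * Q'.side ^ β))
    (A : Set (Euc d)) :
    ∑' q : F, dyadicContent d β Q (A ∩ (q : Cube d).set) ≤ 3 * dyadicContent d β Q A := by
  rw [dyadicContent]
  simp only [ENNReal.mul_iInf_of_ne three_ne_zero ofNat_ne_top]
  refine le_iInf₂ fun c hc => le_iInf fun hA => ?_
  let w : Cube d → ℝ≥0∞ := fun q => ENNReal.ofReal (q.side ^ β)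
  have hpacked : ∀ j, ∑' q : F, (if (q : Cube d).set ⊆ (c j).set then w q else 0) ≤ 2 * w (c j) :=
    fun j => calc
      _ = ∑' q : {q : Cube d // q ∈ F ∧ q.set ⊆ (c j).set}, w q := by
        rw [tsum_subtype F (fun q => if q.set ⊆ (c j).set then w q else 0)]
        refine Eq.trans ?_ (tsum_subtype {q | q ∈ F ∧ q.set ⊆ (c j).set} w).symm
        congr 1 with q
        by_cases hq : q ∈ F <;> by_cases hqc : q.set ⊆ (c j).set <;> simp [hq, hqc]
      _ ≤ ENNReal.ofReal (2 * (c j).side ^ β) := hpack (c j) (hc j)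
      _ = 2 * w (c j) := by rw [ENNReal.ofReal_mul zero_le_two, ENNReal.ofReal_ofNat]
  calc ∑' q : F, dyadicContent d β Q (A ∩ (q : Cube d).set)
      ≤ ∑' (q : F) (j : ℕ), ((if (q : Cube d).set ⊆ (c j).set then w q else 0) +
          if (c j).set ⊆ (q : Cube d).set then w (c j) else 0) :=
        ENNReal.tsum_le_tsum fun q => dyadicContent_inter_le hβ hc hA (hFd q q.2)
    _ = ∑' j, (∑' q : F, (if (q : Cube d).set ⊆ (c j).set then w q else 0) +
          ∑' q : F, if (c j).set ⊆ (q : Cube d).set then w (c j) else 0) := by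
        rw [ENNReal.tsum_comm]
        exact tsum_congr fun j => ENNReal.tsum_add
    _ ≤ ∑' j, (2 * w (c j) + w (c j)) := ENNReal.tsum_le_tsum fun j =>
        add_le_add (hpacked j) (tsum_ite_subset_le_of_pairwise_disjoint hdisj (c j) _)
    _ = 3 * ∑' j, w (c j) := by
        rw [← ENNReal.tsum_mul_left]
        exact tsum_congr fun j => by ring

end Packing

theorem packing_implies_sum_le_integral_general (d : ℕ) (β : ℝ) (hβ : 0 < β) (Q : Cube d) :
    ∃ C' : ℝ, 0 < C' ∧
      ∀ F : Set (Cube d), F.Countable → (∀ q ∈ F, q ∈ Q.dyadic) →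
        (F.Pairwise fun q₁ q₂ => Disjoint (interior q₁.set) (interior q₂.set)) →
        (∀ Q' : Cube d, Q' ∈ Q.dyadic →
          (∑' q : {q : Cube d // q ∈ F ∧ q.set ⊆ Q'.set}, ENNReal.ofReal (q.1.side ^ β)) ≤
            ENNReal.ofReal (2 * Q'.side ^ β)) →
        ∀ f : Euc d → ℝ, (∀ x, 0 ≤ f x) →
          MemChoquetL1 (dyadicContent d β Q) (⋃ q ∈ F, q.set) f →
          (∑' q : F, choquetIntegral (dyadicContent d β Q) (q : Cube d).set f) ≤
            ENNReal.ofReal C' *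
              choquetIntegral (dyadicContent d β Q) (⋃ q ∈ F, q.set) f := by
  refine ⟨3, three_pos, fun F hFc hFd hdisj hpack f _ _ => ?_⟩
  have := hFc.to_subtype
  rw [biUnion_eq_iUnion, ENNReal.ofReal_ofNat]
  exact tsum_choquetIntegral_le dyadicContent_mono
    (tsum_dyadicContent_inter_le hβ hFd hdisj hpack) f

theorem packing_implies_sum_le_integral (d : ℕ) (hd : 1 ≤ d) (β : ℝ) (hβ : 0 < β)
    (hβd : β ≤ (d : ℝ)) (Q : Cube d) :
    ∃ C' : ℝ, 0 < C' ∧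
      ∀ F : Set (Cube d), F.Countable → (∀ q ∈ F, q ∈ Q.dyadic) →
        (F.Pairwise fun q₁ q₂ => Disjoint (interior q₁.set) (interior q₂.set)) →
        (∀ Q' : Cube d, Q' ∈ Q.dyadic →
          (∑' q : {q : Cube d // q ∈ F ∧ q.set ⊆ Q'.set}, ENNReal.ofReal (q.1.side ^ β)) ≤
            ENNReal.ofReal (2 * Q'.side ^ β)) →
        ∀ f : Euc d → ℝ, (∀ x, 0 ≤ f x) →
          MemChoquetL1 (dyadicContent d β Q) (⋃ q ∈ F, q.set) f →
          (∑' q : F, choquetIntegral (dyadicContent d β Q) (q : Cube d).set f) ≤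
            ENNReal.ofReal C' *
              choquetIntegral (dyadicContent d β Q) (⋃ q ∈ F, q.set) f :=
  packing_implies_sum_le_integral_general d β hβ Q

end
end
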